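/- arXiv:1804.02553 — 4 statements merged into one kernel-verified Lean document; each statement's English description precedes it below -/
import Mathlib

section
/- Let V = ℝ^{km} with k ≥ 2, m > 2, standard dual basis e^1,...,e^{km}, and let ω = e^{1...m} + e^{(m+1)...(2m)} + ... + e^{((k-1)m+1)...(km)} ∈ Λ^m V*. Then the forms ω_i = e^{((i-1)m+1)...(im)} are, up to permutation, the unique decomposable m-forms satisfying ω = ω_1 + ... + ω_k. -/
/-!
Write each summand as `ω̃ᵢ = det (Lᵢ ·)` for a linear map `Lᵢ : V → Kᵐ`, and let `Zᵢ` be the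
common kernel of the `Lᵢ'`, `i' ≠ i`; it has dimension at least `m`. For `v ∈ Zᵢ` only `ω̃ᵢ`
survives in `ω (v, …)`, so the contraction of `ω` by `v` is decomposable. When `m ≥ 3`, Cramer's
rule shows that this is impossible if `v` has nonzero coordinates in two different blocks; hence
every vector of `Zᵢ` lies in one block, and by dimension `Zᵢ` is a whole block `σ i`. The map `σ`
is injective because `ω` does not vanish on a block, and `ω̃ᵢ = ω_{σ i}` follows by comparing
both forms on tuples of basis vectors.
-/

/-- The `m`-form `φ¹ ∧ … ∧ φᵐ` (wedge of `m` covectors), evaluated on `m`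
vectors, written as a determinant.  An `m`-form is *decomposable* iff it is of
this shape. -/
noncomputable def detForm {m N : ℕ} (φ : Fin m → ((Fin N → ℝ) →ₗ[ℝ] ℝ))
    (v : Fin m → Fin N → ℝ) : ℝ :=
  Matrix.det (Matrix.of fun a b : Fin m => φ a (v b))

/-- The standard block form `ωᵢ = e^{((i-1)m+1)} ∧ … ∧ e^{(im)}` on `ℝ^{km}`
(0-indexed: the wedge of the coordinate functionals of the `i`-th block of `m`
consecutive coordinates), evaluated on `m` vectors. -/
noncomputable def blockForm (k m : ℕ) (i : Fin k)
    (v : Fin m → Fin (k * m) → ℝ) : ℝ :=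
  Matrix.det (Matrix.of fun a b : Fin m =>
    v b ⟨(i : ℕ) * m + (a : ℕ), by
      have h1 := i.isLt
      have h2 := a.isLt
      calc (i : ℕ) * m + (a : ℕ) < (i : ℕ) * m + m := by omega
        _ = ((i : ℕ) + 1) * m := by ring
        _ ≤ k * m := Nat.mul_le_mul_right m h1⟩)

open Function Matrix Module

theorem Matrix.sum_det_updateRow_smul {n R : Type*} [Fintype n] [DecidableEq n] [CommRing R]
    (A : Matrix n n R) (x : n → R) : ∑ b, (A.updateRow b x).det • A b = A.det • x := by
  have h := mulVec_cramer Aᵀ x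
  rw [det_transpose] at h
  rw [← h]
  ext a
  simp [mulVec, dotProduct, cramer_transpose_apply, mul_comm]

theorem Matrix.det_updateRow_one {n R : Type*} [Fintype n] [DecidableEq n] [CommRing R]
    (i : n) (x : n → R) : (updateRow 1 i x).det = x i := by
  rw [← cramer_transpose_apply, transpose_one, cramer_one]
  rfl

theorem AlternatingMap.map_eq_zero_of_eq_smul {R M N ι : Type*} [CommRing R] [AddCommGroup M]
    [Module R M] [AddCommGroup N] [Module R N] [DecidableEq ι] (f : M [⋀^ι]→ₗ[R] N)
    {v : ι → M} {i j : ι} (hij : i ≠ j) {r : R} (h : v i = r • v j) : f v = 0 := by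
  rw [← update_eq_self i v, h, f.map_update_smul, f.map_update_self _ hij, smul_zero]

theorem Fintype.exists_ne_ne_of_two_lt_card {α : Type*} [Fintype α] (h : 2 < Fintype.card α)
    (a b : α) : ∃ c, c ≠ a ∧ c ≠ b := by
  classical
  obtain ⟨c, hc⟩ : ({a, b}ᶜ : Finset α).Nonempty := by
    rw [← Finset.card_pos, Finset.card_compl]
    have := Finset.card_le_two (a := a) (b := b)
    omega
  exact ⟨c, by simpa [not_or] using hc⟩

namespace BlockForms

variable {K V n ι : Type*} [Field K] [AddCommGroup V] [Module K V]

section BlockCoord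

variable (e : Basis (ι × n) K V)

noncomputable def blockCoord (j : ι) : V →ₗ[K] n → K :=
  LinearMap.pi fun a => e.coord (j, a)

@[simp]
theorem blockCoord_apply (j : ι) (v : V) (a : n) : blockCoord e j v a = e.repr v (j, a) := rfl

theorem blockCoord_basis_self [DecidableEq n] (j : ι) (a : n) :
    blockCoord e j (e (j, a)) = Pi.single a 1 := by
  classical
  ext a'
  simp [Finsupp.single_apply, Pi.single_apply, eq_comm]

theorem blockCoord_basis_of_ne {j : ι} {t : ι × n} (ht : t.1 ≠ j) : blockCoord e j (e t) = 0 := by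
  ext a
  rw [blockCoord_apply, e.repr_self]
  exact Finsupp.single_eq_of_ne fun h => ht (by rw [← h])

end BlockCoord

section KerOthers

variable (L : ι → V →ₗ[K] n → K)

def kerOthers (i₀ : ι) : Submodule K V :=
  LinearMap.ker (LinearMap.pi fun i : {i // i ≠ i₀} => L i)

theorem mem_kerOthers {i₀ : ι} {v : V} : v ∈ kerOthers L i₀ ↔ ∀ i ≠ i₀, L i v = 0 := by
  simp [kerOthers, funext_iff]

theorem card_le_finrank_kerOthers [Fintype ι] [Fintype n] (e : Basis (ι × n) K V) (i₀ : ι) :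
    Fintype.card n ≤ finrank K (kerOthers L i₀) := by
  classical
  have := Module.Finite.of_basis e
  have hsum := LinearMap.finrank_range_add_finrank_ker (LinearMap.pi fun i : {i // i ≠ i₀} => L i)
  have hrange := Submodule.finrank_le (LinearMap.range (LinearMap.pi fun i : {i // i ≠ i₀} => L i))
  rw [finrank_eq_card_basis e, Fintype.card_prod] at hsum
  simp only [Module.finrank_pi_fintype, Module.finrank_self, Finset.sum_const, Finset.card_univ,
    Fintype.card_subtype_compl, Fintype.card_unique, smul_eq_mul, mul_one] at hrange
  have hι : 0 < Fintype.card ι := Fintype.card_pos_iff.mpr ⟨i₀⟩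
  have := Nat.sub_one_mul (Fintype.card ι) (Fintype.card n)
  have := Nat.le_mul_of_pos_left (Fintype.card n) hι
  unfold kerOthers
  omega

end KerOthers

variable [Fintype n] [DecidableEq n]

noncomputable def wedge (L : V →ₗ[K] n → K) : V [⋀^n]→ₗ[K] K :=
  Matrix.detRowAlternating.compLinearMap L

theorem wedge_apply (L : V →ₗ[K] n → K) (w : n → V) :
    wedge L w = (Matrix.of fun b => L (w b)).det := rfl

theorem wedge_eq_zero_of_map_eq_zero (L : V →ₗ[K] n → K) {w : n → V} (b : n) (h : L (w b) = 0) :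
    wedge L w = 0 :=
  det_eq_zero_of_row_eq_zero b fun a => by simp [h]

theorem wedge_eq_zero_of_map_eq_smul (L : V →ₗ[K] n → K) {w : n → V} {i j : n} (hij : i ≠ j)
    {r : K} (h : L (w i) = r • L (w j)) : wedge L w = 0 :=
  Matrix.detRowAlternating.map_eq_zero_of_eq_smul (v := fun b => L (w b)) hij h

theorem sum_wedge_update_smul (L : V →ₗ[K] n → K) (w : n → V) (u : V) :
    ∑ b, wedge L (update w b u) • L (w b) = wedge L w • L u := by
  rw [wedge_apply, ← sum_det_updateRow_smul]
  refine Finset.sum_congr rfl fun b _ => ?_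
  have hrows : (fun b' => L (update w b u b')) = update (fun b' => L (w b')) b (L u) :=
    comp_update L w b u
  rw [wedge_apply, hrows]
  rfl

theorem wedge_smul_eq_of_wedge_update_eq_zero (L : V →ₗ[K] n → K) {w : n → V} {u : V} {a : n}
    (h : ∀ b ≠ a, wedge L (update w b u) = 0) :
    wedge L w • L u = wedge L (update w a u) • L (w a) := by
  rw [← sum_wedge_update_smul, Finset.sum_eq_single a (fun b _ hb => by rw [h b hb, zero_smul])
    (by simp)]

variable (e : Basis (ι × n) K V)

theorem wedge_blockCoord_eq_zero {j : ι} {w : n → V} {b : n} {t : ι × n} (hb : w b = e t)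
    (ht : t.1 ≠ j) : wedge (blockCoord e j) w = 0 :=
  wedge_eq_zero_of_map_eq_zero _ b (by rw [hb, blockCoord_basis_of_ne e ht])

variable [Fintype ι]

noncomputable def blockSum (w : n → V) : K := ∑ j, wedge (blockCoord e j) w

theorem blockSum_update_basis (hn : 1 < Fintype.card n) (j : ι) (a : n) (v : V) :
    blockSum e (update (fun b => e (j, b)) a v) = e.repr v (j, a) := by
  obtain ⟨b, hb⟩ := Fintype.exists_ne_of_one_lt_card hn a
  rw [blockSum, Finset.sum_eq_single j
    (fun l _ hl => wedge_blockCoord_eq_zero e (update_of_ne hb _ _) hl.symm) (by simp)]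
  have hrows : (of fun b' => blockCoord e j (update (fun b => e (j, b)) a v b')) =
      updateRow 1 a (blockCoord e j v) := by
    ext b' a'
    rcases eq_or_ne b' a with rfl | hb'
    · simp
    · simp only [of_apply, update_of_ne hb', updateRow_ne hb', blockCoord_basis_self,
        one_apply, Pi.single_apply, eq_comm]
  rw [wedge_apply, hrows, det_updateRow_one, blockCoord_apply]

theorem blockSum_basis (hn : 1 < Fintype.card n) (j : ι) : blockSum e (fun b => e (j, b)) = 1 := by
  obtain ⟨a⟩ : Nonempty n := Fintype.card_pos_iff.mp (by omega)
  simpa using blockSum_update_basis e hn j a (e (j, a))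

theorem blockSum_update_update_basis (hn : 2 < Fintype.card n) {j₀ j₁ : ι} (hj : j₀ ≠ j₁)
    (a b c : n) (v : V) :
    blockSum e (update (update (fun b => e (j₁, b)) a v) b (e (j₀, c))) = 0 := by
  refine Finset.sum_eq_zero fun l _ => ?_
  rcases eq_or_ne l j₁ with rfl | hl
  · exact wedge_blockCoord_eq_zero e (update_self _ _ _) hj
  · obtain ⟨b', hb'b, hb'a⟩ := Fintype.exists_ne_ne_of_two_lt_card hn b a
    exact wedge_blockCoord_eq_zero e (t := (j₁, b'))
      (by rw [update_of_ne hb'b, update_of_ne hb'a]) hl.symm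

variable {e} {L : ι → V →ₗ[K] n → K}

theorem wedge_eq_blockSum_of_mem (hL : ∀ w, ∑ i, wedge (L i) w = blockSum e w) {i₀ : ι}
    {w : n → V} {b : n} (hb : w b ∈ kerOthers L i₀) : wedge (L i₀) w = blockSum e w := by
  rw [← hL, Finset.sum_eq_single i₀ (fun i _ hi => wedge_eq_zero_of_map_eq_zero _ b
    ((mem_kerOthers L).mp hb i hi)) (by simp)]

/- Cramer's rule turns the vanishing of `blockSum e` on the mixed tuples into
`L i₀ (e (j₀, c)) ∥ L i₀ v`, which kills the value of `wedge (L i₀)` that computes the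
coordinate `(j₀, a₀)` of `v`. -/
theorem repr_eq_zero_of_mem_kerOthers (hL : ∀ w, ∑ i, wedge (L i) w = blockSum e w)
    (hn : 2 < Fintype.card n) {i₀ : ι} {v : V} (hv : v ∈ kerOthers L i₀) {s t : ι × n}
    (hst : s.1 ≠ t.1) (hs : e.repr v s ≠ 0) : e.repr v t = 0 := by
  obtain ⟨j₀, a₀⟩ := s
  obtain ⟨j₁, a₁⟩ := t
  by_contra ht
  set w := update (fun b => e (j₁, b)) a₁ v
  have hwa : w a₁ = v := update_self ..
  have hw : wedge (L i₀) w = e.repr v (j₁, a₁) := by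
    rw [wedge_eq_blockSum_of_mem hL (b := a₁) (hwa ▸ hv), blockSum_update_basis e (by omega)]
  obtain ⟨c, hc⟩ := Fintype.exists_ne_of_one_lt_card (by omega) a₀
  have hmixed : ∀ b ≠ a₁, wedge (L i₀) (update w b (e (j₀, c))) = 0 := fun b hb => by
    rw [wedge_eq_blockSum_of_mem hL (b := a₁) (by rwa [update_of_ne hb.symm, hwa]),
      blockSum_update_update_basis e hn hst]
  have hparallel := wedge_smul_eq_of_wedge_update_eq_zero (L i₀) hmixed
  rw [hw, hwa] at hparallel
  apply hs
  rw [← blockSum_update_basis e (by omega) j₀ a₀ v,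
    ← wedge_eq_blockSum_of_mem hL (b := a₀) (by rwa [update_self])]
  refine wedge_eq_zero_of_map_eq_smul (L i₀) hc
    (r := (e.repr v (j₁, a₁))⁻¹ * wedge (L i₀) (update w a₁ (e (j₀, c)))) ?_
  rw [update_of_ne hc, update_self, mul_smul, ← hparallel, inv_smul_smul₀ ht]

theorem exists_basis_block_mem_kerOthers (hL : ∀ w, ∑ i, wedge (L i) w = blockSum e w)
    (hn : 2 < Fintype.card n) (i₀ : ι) : ∃ j, ∀ a, e (j, a) ∈ kerOthers L i₀ := by
  have hdim := card_le_finrank_kerOthers L e i₀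
  set Z := kerOthers L i₀
  obtain ⟨v₀, hv₀, hv₀_ne⟩ := (Submodule.ne_bot_iff Z).mp fun h => by
    rw [h, finrank_bot] at hdim
    omega
  obtain ⟨s, hs⟩ := Finsupp.ne_iff.mp ((map_ne_zero_iff _ e.repr.injective).mpr hv₀_ne)
  rw [Finsupp.coe_zero, Pi.zero_apply] at hs
  have hcore : ∀ v ∈ Z, ∀ {s t : ι × n}, s.1 ≠ t.1 → e.repr v s ≠ 0 → e.repr v t = 0 :=
    fun v hv _ _ => repr_eq_zero_of_mem_kerOthers hL hn hv
  have hZ : Z ≤ Submodule.span K (Set.range (e ∘ Prod.mk s.1)) := by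
    intro w hw
    rw [Set.range_comp, e.mem_span_image]
    intro t ht
    by_contra hts
    have hts : s.1 ≠ t.1 := fun h => hts ⟨t.2, by rw [h]⟩
    have hwt : e.repr w t ≠ 0 := Finsupp.mem_support_iff.mp ht
    have hv₀t := hcore v₀ hv₀ hts hs
    have hws := hcore w hw hts.symm hwt
    exact hwt (by simpa [hv₀t] using hcore _ (Z.add_mem hv₀ hw) hts (by simpa [hws] using hs))
  have := Module.Finite.of_basis e
  have hZ_eq := Submodule.eq_of_le_of_finrank_le hZ ((finrank_range_le_card _).trans hdim)
  exact ⟨s.1, fun a => hZ_eq ▸ Submodule.subset_span ⟨a, rfl⟩⟩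

theorem map_basis_eq_zero_of_block_mem (hL : ∀ w, ∑ i, wedge (L i) w = blockSum e w)
    (hn : 1 < Fintype.card n) {i j : ι} (hj : ∀ a, e (j, a) ∈ kerOthers L i) {t : ι × n}
    (ht : t.1 ≠ j) : L i (e t) = 0 := by
  obtain ⟨a⟩ : Nonempty n := Fintype.card_pos_iff.mp (by omega)
  have hw : wedge (L i) (fun b => e (j, b)) = 1 := by
    rw [wedge_eq_blockSum_of_mem hL (hj a), blockSum_basis e hn]
  have hupdate : ∀ b, wedge (L i) (update (fun b => e (j, b)) b (e t)) = 0 := fun b => by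
    obtain ⟨b', hb'⟩ := Fintype.exists_ne_of_one_lt_card hn b
    rw [wedge_eq_blockSum_of_mem hL (b := b') (by rw [update_of_ne hb']; exact hj b'),
      blockSum_update_basis e hn, e.repr_self, Finsupp.single_eq_of_ne fun h => ht (by rw [← h])]
  simpa [hw, hupdate] using wedge_smul_eq_of_wedge_update_eq_zero (L i) (a := a) fun b _ => hupdate b

theorem wedge_eq_wedge_blockCoord_of_block_mem (hL : ∀ w, ∑ i, wedge (L i) w = blockSum e w)
    (hn : 1 < Fintype.card n) {i j : ι} (hj : ∀ a, e (j, a) ∈ kerOthers L i) :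
    wedge (L i) = wedge (blockCoord e j) := by
  refine e.ext_alternating fun t _ => ?_
  by_cases hblock : ∀ b, (t b).1 = j
  · obtain ⟨b⟩ : Nonempty n := Fintype.card_pos_iff.mp (by omega)
    have hb : e (t b) ∈ kerOthers L i := by
      rw [← Prod.mk.eta (p := t b), hblock b]
      exact hj _
    rw [wedge_eq_blockSum_of_mem hL hb, blockSum, Finset.sum_eq_single j
      (fun l _ hl => wedge_blockCoord_eq_zero e rfl (by rw [hblock b]; exact hl.symm)) (by simp)]
  · obtain ⟨b, hb⟩ := not_forall.mp hblock
    rw [wedge_eq_zero_of_map_eq_zero _ b (map_basis_eq_zero_of_block_mem hL hn hj hb),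
      wedge_blockCoord_eq_zero e rfl hb]

theorem exists_perm_wedge_eq_wedge_blockCoord (hL : ∀ w, ∑ i, wedge (L i) w = blockSum e w)
    (hn : 2 < Fintype.card n) :
    ∃ σ : Equiv.Perm ι, ∀ i, wedge (L i) = wedge (blockCoord e (σ i)) := by
  choose σ hσ using exists_basis_block_mem_kerOthers hL hn
  have hσ_inj : Injective σ := by
    intro i₀ i₁ h
    by_contra hne
    obtain ⟨a⟩ : Nonempty n := Fintype.card_pos_iff.mp (by omega)
    have hkill : ∀ i, L i (e (σ i₀, a)) = 0 := by
      intro i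
      rcases eq_or_ne i i₀ with rfl | hi
      · exact (mem_kerOthers L).mp (h ▸ hσ i₁ a) i hne
      · exact (mem_kerOthers L).mp (hσ i₀ a) i hi
    have hsum := hL fun b => e (σ i₀, b)
    rw [Finset.sum_eq_zero fun i _ => wedge_eq_zero_of_map_eq_zero _ a (hkill i),
      blockSum_basis e (by omega)] at hsum
    exact zero_ne_one hsum
  exact ⟨Equiv.ofBijective σ hσ_inj.bijective_of_finite,
    fun i => wedge_eq_wedge_blockCoord_of_block_mem hL (by omega) (hσ i)⟩

end BlockForms

open BlockForms

theorem detForm_eq_wedge {m N : ℕ} (φ : Fin m → (Fin N → ℝ) →ₗ[ℝ] ℝ) :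
    detForm φ = wedge (LinearMap.pi φ) := by
  funext v
  rw [detForm, wedge_apply, ← det_transpose]
  rfl

noncomputable def blockBasis (k m : ℕ) : Basis (Fin k × Fin m) ℝ (Fin (k * m) → ℝ) :=
  (Pi.basisFun ℝ (Fin (k * m))).reindex finProdFinEquiv.symm

theorem blockForm_eq_wedge_blockCoord (k m : ℕ) (j : Fin k) :
    blockForm k m j = wedge (blockCoord (blockBasis k m) j) := by
  funext v
  rw [blockForm, wedge_apply, ← det_transpose]
  congr 1
  ext a c
  simp only [of_apply, transpose_apply, blockCoord_apply, blockBasis, Basis.repr_reindex_apply,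
    Pi.basisFun_repr, Equiv.symm_symm]
  congr 1
  ext
  simp only [finProdFinEquiv_apply_val]
  ring

theorem stmt4_general (k m : ℕ) (hm : 2 < m)
    (ωt : Fin k → ((Fin m → Fin (k * m) → ℝ) → ℝ))
    (hdec : ∀ i, ∃ φ : Fin m → ((Fin (k * m) → ℝ) →ₗ[ℝ] ℝ), ωt i = detForm φ)
    (hsum : ∀ v, ∑ i, ωt i v = ∑ i : Fin k, blockForm k m i v) :
    ∃ e : Equiv.Perm (Fin k), ∀ i, ωt i = blockForm k m (e i) := by
  choose φ hφ using hdec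
  simp only [hφ, detForm_eq_wedge, blockForm_eq_wedge_blockCoord] at hsum ⊢
  obtain ⟨σ, hσ⟩ := exists_perm_wedge_eq_wedge_blockCoord (e := blockBasis k m)
    (L := fun i => LinearMap.pi (φ i)) hsum (by simpa using hm)
  exact ⟨σ, fun i => by rw [hσ]⟩

/-- on `V = ℝ^{km}` (`k ≥ 2`, `m > 2`), the block forms
`ωᵢ = e^{((i-1)m+1)…(im)}` are, up to permutation, the unique decomposable
`m`-forms summing to `ω = ω₁ + … + ω_k`. -/
theorem stmt4 (k m : ℕ) (hk : 2 ≤ k) (hm : 2 < m)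
    (ωt : Fin k → ((Fin m → Fin (k * m) → ℝ) → ℝ))
    (hdec : ∀ i, ∃ φ : Fin m → ((Fin (k * m) → ℝ) →ₗ[ℝ] ℝ), ωt i = detForm φ)
    (hsum : ∀ v, ∑ i, ωt i v = ∑ i : Fin k, blockForm k m i v) :
    ∃ e : Equiv.Perm (Fin k), ∀ i, ωt i = blockForm k m (e i) :=
  stmt4_general k m hm ωt hdec hsum
end

section
/- Let m > 2, let V be a 2m-dimensional real vector space with a linear complex structure J, and let ω = ω^ℝ + i ω^𝕀 ∈ Λ^{m,0} V* be a nonzero complex (m,0)-form (a complex volume form on (V,J)). Then the set A = {A ∈ End_ℝ(V) : ι_{A(w)} ι_v ω^ℝ = ι_w ι_{A(v)} ω^ℝ for all v, w ∈ V} equals ℝ·id ⊕ ℝ·J. -/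
/-!
Let `i` act on `V` by `J`; then `ω` is a nonzero top-degree `ℂ`-multilinear form. Multiplying
one of the remaining arguments `u` by `i` turns the identity for the real parts into the complex
identity `ι_{Aw} ι_v ω = ι_w ι_{Av} ω`. For `w = v` antisymmetry gives `ι_{Av} ι_v ω = 0`, so
`Av ∈ ℂ v`; replacing `v` by `Jv` shows that `A` commutes with `J`. A `ℂ`-linear map of which
every vector is an eigenvector is a scalar `a + b i`, that is, `A = a + b J`.
-/

open Module Function Complex

theorem exists_linearIndependent_cons_cons {K V : Type*} [DivisionRing K] [AddCommGroup V]
    [Module K V] [FiniteDimensional K V] {x y : V} (hxy : LinearIndependent K ![x, y]) :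
    ∀ {m : ℕ}, m + 2 ≤ finrank K V →
      ∃ rest : Fin m → V, LinearIndependent K (Fin.cons x (Fin.cons y rest) : Fin (m + 2) → V)
  | 0, _ => ⟨Fin.elim0, by convert hxy using 2; ext i; fin_cases i <;> rfl⟩
  | m + 1, hm => by
    obtain ⟨rest, hrest⟩ := exists_linearIndependent_cons_cons hxy (m := m) (by omega)
    obtain ⟨z, hz⟩ := exists_linearIndependent_snoc_of_lt_finrank hrest (by omega)
    refine ⟨Fin.snoc rest z, ?_⟩
    rwa [Fin.cons_snoc_eq_snoc_cons, Fin.cons_snoc_eq_snoc_cons]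

theorem Complex.re_smul_add_im_smul_I_smul {V : Type*} [AddCommGroup V] [Module ℂ V] [Module ℝ V]
    [IsScalarTower ℝ ℂ V] (z : ℂ) (x : V) : z.re • x + z.im • (I • x) = z • x := by
  conv_rhs => rw [← z.re_add_im]
  rw [add_smul, mul_smul, ← coe_algebraMap, algebraMap_smul, algebraMap_smul]

theorem LinearMap.map_complex_smul_of_map_I_smul {V : Type*} [AddCommGroup V] [Module ℂ V]
    [Module ℝ V] [IsScalarTower ℝ ℂ V] (A : V →ₗ[ℝ] V) (hA : ∀ v, A (I • v) = I • A v)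
    (z : ℂ) (v : V) : A (z • v) = z • A v := by
  rw [← re_smul_add_im_smul_I_smul z v, map_add, map_smul, map_smul, hA,
    re_smul_add_im_smul_I_smul]

namespace AlternatingMap

theorem curryLeft_curryLeft_swap {R M N : Type*} [CommRing R] [AddCommGroup M] [Module R M]
    [AddCommGroup N] [Module R N] {n : ℕ} (f : M [⋀^Fin (n + 2)]→ₗ[R] N) (x y : M) :
    (f.curryLeft x).curryLeft y = -(f.curryLeft y).curryLeft x := by
  have h := f.curryLeft_same (x + y)
  simp only [map_add, curryLeft_add, LinearMap.add_apply, curryLeft_same, zero_add, add_zero] at h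
  exact eq_neg_of_add_eq_zero_right h

section TopDegree

variable {K V : Type*} [Field K] [AddCommGroup V] [Module K V] [FiniteDimensional K V] {n : ℕ}
  {ω : V [⋀^Fin (n + 2)]→ₗ[K] K}

theorem exists_map_cons_cons_ne_zero (hn : finrank K V = n + 2) (hω : ω ≠ 0) {x y : V}
    (hxy : LinearIndependent K ![x, y]) :
    ∃ rest : Fin n → V, ω (Fin.cons x (Fin.cons y rest)) ≠ 0 := by
  obtain ⟨rest, hli⟩ := exists_linearIndependent_cons_cons hxy hn.ge
  refine ⟨rest, ?_⟩
  have := (ω.map_basis_ne_zero_iff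
    (basisOfLinearIndependentOfCardEqFinrank hli (by simp [hn]))).2 hω
  rwa [coe_basisOfLinearIndependentOfCardEqFinrank] at this

theorem not_linearIndependent_of_curryLeft_curryLeft_eq_zero (hn : finrank K V = n + 2)
    (hω : ω ≠ 0) {x y : V} (h : (ω.curryLeft x).curryLeft y = 0) :
    ¬ LinearIndependent K ![x, y] := fun hxy ↦ by
  obtain ⟨rest, hrest⟩ := exists_map_cons_cons_ne_zero hn hω hxy
  exact hrest congr($h rest)

theorem eq_of_forall_curryLeft_curryLeft_eq (hn : finrank K V = n + 2) (hω : ω ≠ 0) {x x' : V}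
    (h : ∀ y, (ω.curryLeft x).curryLeft y = (ω.curryLeft x').curryLeft y) : x = x' := by
  rw [← sub_eq_zero]
  by_contra hx
  obtain ⟨y, hxy⟩ := exists_linearIndependent_pair_of_one_lt_finrank (R := K) (by omega) hx
  refine not_linearIndependent_of_curryLeft_curryLeft_eq_zero hn hω ?_ hxy
  rw [map_sub]
  exact sub_eq_zero.2 (h y)

end TopDegree

section Complex

variable {V : Type*} [AddCommGroup V] [Module ℂ V]

theorem eq_zero_of_forall_re_eq_zero {ι : Type*} [Nonempty ι] {g : V [⋀^ι]→ₗ[ℂ] ℂ}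
    (h : ∀ u, (g u).re = 0) : g = 0 := by
  classical
  ext u
  obtain ⟨i⟩ := ‹Nonempty ι›
  have hI := h (update u i (I • u i))
  rw [g.map_update_smul, update_eq_self, smul_eq_mul, mul_re, I_re, I_im, h u] at hI
  exact Complex.ext (h u) (by simpa using hI)

variable [Module ℝ V] [IsScalarTower ℝ ℂ V]

noncomputable def toComplexLinear {ι : Type*} (ω : V [⋀^ι]→ₗ[ℝ] ℂ)
    (hω : ∀ [DecidableEq ι] (v : ι → V) (i : ι), ω (update v i (I • v i)) = I * ω v) :
    V [⋀^ι]→ₗ[ℂ] ℂ where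
  toFun := ω
  map_update_add' v := ω.map_update_add v
  map_update_smul' v i z x := by
    have hIx := hω (update v i x) i
    rw [update_self, update_idem] at hIx
    rw [← re_smul_add_im_smul_I_smul, ω.map_update_add, ω.map_update_smul, ω.map_update_smul,
      hIx, real_smul, real_smul, smul_eq_mul]
    linear_combination ω (update v i x) * z.re_add_im
  map_eq_zero_of_eq' := ω.map_eq_zero_of_eq

variable [FiniteDimensional ℂ V] {n : ℕ} {ω : V [⋀^Fin (n + 3)]→ₗ[ℂ] ℂ}

theorem forall_re_map_cons_cons_eq_iff (hn : finrank ℂ V = n + 3) (hω : ω ≠ 0)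
    (A : V →ₗ[ℝ] V) :
    (∀ (v w : V) (u : Fin (n + 1) → V),
        (ω (Fin.cons v (Fin.cons (A w) u))).re = (ω (Fin.cons (A v) (Fin.cons w u))).re) ↔
      ∃ c : ℂ, ∀ v, A v = c • v := by
  constructor
  · intro H
    have hsymm (v w : V) : (ω.curryLeft v).curryLeft (A w) = (ω.curryLeft (A v)).curryLeft w :=
      sub_eq_zero.1 <| eq_zero_of_forall_re_eq_zero fun u ↦ by
        rw [sub_apply, sub_re, sub_eq_zero]
        exact H v w u
    have hI (v : V) : A (I • v) = I • A v := by
      refine eq_of_forall_curryLeft_curryLeft_eq hn hω fun w ↦ ?_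
      rw [← hsymm, map_smul, map_smul, curryLeft_smul, curryLeft_smul, LinearMap.smul_apply,
        LinearMap.smul_apply, hsymm]
    have hcollinear (v : V) : ¬ LinearIndependent ℂ ![v, A v] := by
      refine not_linearIndependent_of_curryLeft_curryLeft_eq_zero hn hω ?_
      ext u
      have h := congr($(hsymm v v) u)
      rw [curryLeft_curryLeft_swap ω (A v), neg_apply] at h
      exact self_eq_neg.1 h
    let Aℂ : V →ₗ[ℂ] V := { A with map_smul' := A.map_complex_smul_of_map_I_smul hI }
    obtain ⟨c, hc⟩ := LinearMap.exists_eq_smul_id_of_forall_notLinearIndependent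
      (f := Aℂ) hcollinear
    exact ⟨c, fun v ↦ congr($hc v)⟩
  · rintro ⟨c, hc⟩ v w u
    rw [hc, hc]
    congr 1
    change (ω.curryLeft v).curryLeft (c • w) u = (ω.curryLeft (c • v)).curryLeft w u
    rw [map_smul, map_smul, curryLeft_smul, LinearMap.smul_apply]

end Complex

end AlternatingMap

section ComplexStructure

variable {V : Type*} [AddCommGroup V] [Module ℝ V] (J : V →ₗ[ℝ] V) (hJ : J ∘ₗ J = -LinearMap.id)

abbrev Module.ofComplexStructure : Module ℂ V :=
  letI : SMul ℂ V := ⟨fun z v ↦ z.re • v + z.im • J v⟩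
  have hJJ (v : V) : J (J v) = -v := congr($hJ v)
  .ofMinimalAxioms
    (fun z u v ↦ show _ + _ = (_ + _) + (_ + _) by rw [map_add]; module)
    (fun z w v ↦ show _ + _ = (_ + _) + (_ + _) by rw [add_re, add_im]; module)
    (fun z w v ↦ show _ + _ = _ • (_ + _) + _ • J (_ + _) by
      rw [map_add, map_smul, map_smul, hJJ, mul_re, mul_im]; module)
    (fun v ↦ show _ + _ = v by simp)

theorem Module.ofComplexStructure_smul (z : ℂ) (v : V) :
    letI := Module.ofComplexStructure J hJ
    z • v = z.re • v + z.im • J v :=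
  rfl

theorem Module.isScalarTower_ofComplexStructure :
    letI := Module.ofComplexStructure J hJ
    IsScalarTower ℝ ℂ V :=
  letI := Module.ofComplexStructure J hJ
  ⟨fun r z v ↦ by
    simp only [ofComplexStructure_smul, smul_re, smul_im, smul_eq_mul, smul_add, mul_smul]⟩

end ComplexStructure

/-- Let `V` be a `2m`-dimensional real vector space (`m > 2`,
here `m = q+3`) with a linear complex structure `J`, and let
`ω ∈ Λ^{m,0}V*` be a nonzero complex `(m,0)`-form, i.e. a real-multilinear
alternating `m`-form with values in `ℂ` that is `ℂ`-linear in each argument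
(`ι_{Jv}ω = i·ι_vω`).  Then an `ℝ`-linear endomorphism `A` of `V` satisfies
`ι_{A w} ι_v ω^ℝ = ι_w ι_{A v} ω^ℝ` for all `v, w` (with `ω^ℝ = Re ω`)
if and only if `A ∈ ℝ·id ⊕ ℝ·J`. -/
theorem stmt5 {V : Type*} [AddCommGroup V] [Module ℝ V] [FiniteDimensional ℝ V]
    (q : ℕ) (hdim : Module.finrank ℝ V = 2 * (q + 3))
    (J : V →ₗ[ℝ] V) (hJ : J.comp J = -LinearMap.id)
    (ω : V [⋀^Fin (q + 3)]→ₗ[ℝ] ℂ)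
    (hC : ∀ (v : Fin (q + 3) → V) (i : Fin (q + 3)),
      ω (Function.update v i (J (v i))) = Complex.I * ω v)
    (hne : ω ≠ 0) (A : V →ₗ[ℝ] V) :
    (∀ (v w : V) (u : Fin (q + 1) → V),
        (ω (Fin.cons v (Fin.cons (A w) u))).re =
          (ω (Fin.cons (A v) (Fin.cons w u))).re)
      ↔ ∃ a b : ℝ, A = a • LinearMap.id + b • J := by
  let := Module.ofComplexStructure J hJ
  have := Module.isScalarTower_ofComplexStructure J hJ
  have : FiniteDimensional ℂ V := .right ℝ ℂ V
  have hrank : finrank ℂ V = q + 3 := by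
    have := finrank_mul_finrank ℝ ℂ V
    rw [hdim, finrank_real_complex] at this
    omega
  have hJ_eq (v : V) : J v = I • v := by simp [Module.ofComplexStructure_smul]
  let ωc := ω.toComplexLinear fun v i ↦ by convert hC v i using 3; exact (hJ_eq _).symm
  have hωc : ωc ≠ 0 := fun h ↦ hne (AlternatingMap.ext fun v ↦ congr($h v))
  have hA (c : ℂ) : (∀ v, A v = c • v) ↔ A = c.re • LinearMap.id + c.im • J := by
    simp [LinearMap.ext_iff, Module.ofComplexStructure_smul]
  refine (ωc.forall_re_map_cons_cons_eq_iff hrank hωc A).trans ⟨?_, ?_⟩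
  · rintro ⟨c, hc⟩
    exact ⟨c.re, c.im, (hA c).1 hc⟩
  · rintro ⟨a, b, rfl⟩
    exact ⟨⟨a, b⟩, (hA ⟨a, b⟩).2 rfl⟩
end

section
/- Let (M, ω) be a symplectic manifold of dimension 2n with n > 1 and 1 ≤ j < n. If a vector field X satisfies L_X(ω^j) = 0, then L_X ω = 0. Hence the Lie algebra of ω^j-preserving vector fields equals the Lie algebra of symplectic vector fields for j < n. -/
namespace Stmt8

variable {E : Type*} [NormedAddCommGroup E] [NormedSpace ℝ E]

/-- Exterior derivative of a `k`-form on a vector space. -/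
noncomputable def extD {k : ℕ} (ω : E → (Fin k → E) → ℝ) :
    E → (Fin (k + 1) → E) → ℝ :=
  fun x v => ∑ i : Fin (k + 1), (-1 : ℝ) ^ (i : ℕ) *
    fderiv ℝ (fun y => ω y (v ∘ i.succAbove)) x (v i)

/-- Lie derivative of a `k`-form along a vector field on a vector space
(evaluated on constant extensions of the given tangent vectors). -/
noncomputable def lieD {k : ℕ} (X : E → E) (ω : E → (Fin k → E) → ℝ) :
    E → (Fin k → E) → ℝ :=
  fun x v => fderiv ℝ (fun y => ω y v) x (X x) +
    ∑ i : Fin k, ω x (Function.update v i (fderiv ℝ X x (v i)))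

/-- The `j`-fold wedge power `B^j` of a 2-form `B`, evaluated on `2j` vectors. -/
noncomputable def wpow (j : ℕ) (B : E → E → ℝ) (v : Fin (2 * j) → E) : ℝ :=
  (1 / (2 : ℝ) ^ j) * ∑ σ : Equiv.Perm (Fin (2 * j)),
    ((Equiv.Perm.sign σ : ℤ) : ℝ) *
      ∏ i : Fin j, B (v (σ ⟨2 * (i : ℕ), by have := i.isLt; omega⟩))
        (v (σ ⟨2 * (i : ℕ) + 1, by have := i.isLt; omega⟩))

open Finset Equiv

variable {α : Type*}

def pairEquiv (j : ℕ) : (Fin j × Bool) ≃ Fin (2 * j) where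
  toFun p := ⟨2 * p.1 + (if p.2 then 1 else 0), by
    rcases p with ⟨⟨i, hi⟩, b⟩; cases b <;> simp <;> omega⟩
  invFun q := (⟨q.1 / 2, by have := q.isLt; omega⟩, decide (q.1 % 2 = 1))
  left_inv := by
    rintro ⟨⟨i, hi⟩, b⟩
    cases b <;> simp [Prod.ext_iff, Fin.ext_iff] <;> omega
  right_inv := by
    rintro ⟨q, hq⟩
    by_cases h : q % 2 = 1 <;> simp [Prod.ext_iff, Fin.ext_iff, h] <;> omega

@[simp] lemma pairEquiv_false {j : ℕ} (k : Fin j) :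
    pairEquiv j (k, false) = ⟨2 * k, by have := k.isLt; omega⟩ := by
  simp [pairEquiv]

@[simp] lemma pairEquiv_true {j : ℕ} (k : Fin j) :
    pairEquiv j (k, true) = ⟨2 * k + 1, by have := k.isLt; omega⟩ := by
  simp [pairEquiv]

noncomputable def S2 {j : ℕ} (O B : α → α → ℝ) (w : Fin j × Bool → α) : ℝ :=
  ∑ π : Perm (Fin j × Bool), ((Perm.sign π : ℤ) : ℝ) *
    ∑ k : Fin j, B (w (π (k, false))) (w (π (k, true))) *
      ∏ l ∈ univ.erase k, O (w (π (l, false))) (w (π (l, true)))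

def matched {j : ℕ} (π : Perm (Fin j × Bool)) : Prop :=
  ∀ l : Fin j, (π (l, false)).1 = (π (l, true)).1

instance {j : ℕ} : DecidablePred (matched (j := j)) := fun _ => by
  unfold matched; infer_instance

lemma exists_mismatch {j : ℕ} {π : Perm (Fin j × Bool)} (h : ¬ matched π) (k : Fin j) :
    ∃ l, l ≠ k ∧ (π (l, false)).1 ≠ (π (l, true)).1 := by
  by_contra hcon
  push_neg at hcon
  apply h
  intro l
  by_cases hlk : l = k
  · subst hlk
    by_contra hmis
    set p := π (l, false) with hp
    set r := π.symm (p.1, !p.2) with hr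
    have hπr : π r = (p.1, !p.2) := π.apply_symm_apply _
    have hrl : r.1 ≠ l := by
      intro he
      rcases hrr : r with ⟨r1, rb⟩
      rw [hrr] at hπr he
      subst he
      cases rb
      · rw [← hp] at hπr
        have := congrArg Prod.snd hπr
        simp at this
      · exact hmis (by rw [hπr])
    have hm := hcon r.1 hrl
    -- both images of block r.1 have first component p.1
    have h0 : (π (r.1, false)).1 = p.1 ∧ (π (r.1, true)).1 = p.1 := by
      rcases hrr : r.2
      · have : π (r.1, false) = (p.1, !p.2) := by
          rw [← hπr]; congr 1; rw [← hrr]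
        constructor
        · rw [this]
        · rw [← hm, this]
      · have : π (r.1, true) = (p.1, !p.2) := by
          rw [← hπr]; congr 1; rw [← hrr]
        constructor
        · rw [hm, this]
        · rw [this]
    have hne : (π (r.1, false)).2 ≠ (π (r.1, true)).2 := by
      intro he
      have : π (r.1, false) = π (r.1, true) :=
        Prod.ext (h0.1.trans h0.2.symm) he
      have := π.injective this
      simp at this
    -- p equals one of the two block images, contradiction with injectivity
    have : p = π (r.1, false) ∨ p = π (r.1, true) := by
      by_cases hq : p.2 = (π (r.1, false)).2
      · exact Or.inl (Prod.ext h0.1.symm hq)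
      · refine Or.inr (Prod.ext h0.2.symm ?_)
        rcases hb : (π (r.1, false)).2 <;> rcases hb' : (π (r.1, true)).2 <;>
          rcases hbp : p.2 <;> simp_all
    rcases this with he | he
    · have := π.injective (hp.symm.trans he)
      exact hrl (congrArg Prod.fst this).symm
    · have := π.injective (hp.symm.trans he)
      exact hrl (congrArg Prod.fst this).symm
  · exact hcon l hlk

section KE2
open Finset Equiv
variable {α : Type*}

lemma matched_eval {j : ℕ} (O B : α → α → ℝ) (w : Fin j × Bool → α) (c : Fin j → ℝ)
    (hBanti : ∀ m, B (w (m, true)) (w (m, false)) = - B (w (m, false)) (w (m, true)))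
    (hc : ∀ m, O (w (m, false)) (w (m, true)) = c m)
    (hOanti : ∀ m, O (w (m, true)) (w (m, false)) = - c m)
    {π : Perm (Fin j × Bool)} (hπ : matched π) :
    ((Perm.sign π : ℤ) : ℝ) *
      ∑ k : Fin j, B (w (π (k, false))) (w (π (k, true))) *
        ∏ l ∈ univ.erase k, O (w (π (l, false))) (w (π (l, true)))
    = ∑ m : Fin j, B (w (m, false)) (w (m, true)) * ∏ m' ∈ univ.erase m, c m' := by
  classical
  set mm : Fin j → Fin j := fun l => (π (l, false)).1 with hmm
  set ss : Fin j → Bool := fun l => (π (l, false)).2 with hss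
  have f1 : ∀ l, π (l, false) = (mm l, ss l) := fun l => by simp [hmm, hss]
  have f2 : ∀ l, π (l, true) = (mm l, !(ss l)) := by
    intro l
    have hfst : (π (l, true)).1 = mm l := (hπ l).symm
    have hsnd : (π (l, true)).2 ≠ ss l := by
      intro he
      have : π (l, true) = π (l, false) := Prod.ext (hπ l).symm (by rw [he, hss])
      have := π.injective this
      simp at this
    refine Prod.ext hfst ?_
    show (π (l, true)).2 = !(ss l)
    rcases h : (π (l, true)).2 <;> rcases h' : ss l
    · exact absurd (h.trans h'.symm) hsnd
    · rfl
    · rfl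
    · exact absurd (h.trans h'.symm) hsnd
  have inj : Function.Injective mm := by
    intro l1 l2 he
    by_cases hs : ss l1 = ss l2
    · have : π (l1, false) = π (l2, false) := by rw [f1, f1, he, hs]
      have := π.injective this
      exact (Prod.ext_iff.mp this).1
    · have hs' : ss l1 = !(ss l2) := by
        rcases h : ss l1 <;> rcases h' : ss l2
        · exact absurd (h.trans h'.symm) hs
        · rfl
        · rfl
        · exact absurd (h.trans h'.symm) hs
      have : π (l1, false) = π (l2, true) := by rw [f1, f2, he, hs']
      have := π.injective this
      simp at this
  have bij : Function.Bijective mm := Finite.injective_iff_bijective.mp inj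
  set τ : Perm (Fin j) := Equiv.ofBijective mm bij with hτ
  -- sign computation
  set dd : Fin j → ℝ := fun l => if ss l then (-1 : ℝ) else 1 with hdd
  have hsgn : ((Perm.sign π : ℤ) : ℝ) = ∏ l : Fin j, dd l := by
    have hdecomp : π = (Equiv.prodCongrLeft fun _ : Bool => τ) *
        (Equiv.prodCongrRight fun l => if ss l then Equiv.swap false true else 1) := by
      apply Equiv.ext
      rintro ⟨l, b⟩
      have hτl : τ l = mm l := rfl
      cases b <;> by_cases h : ss l = true <;>
        simp [Perm.mul_apply, Equiv.prodCongrLeft_apply, Equiv.prodCongrRight_apply,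
          h, f1, f2, hτl]
    have hsτ : Perm.sign π =
        ∏ l : Fin j, (if ss l then (-1 : ℤˣ) else 1) := by
      rw [hdecomp, map_mul, Perm.sign_prodCongrLeft, Perm.sign_prodCongrRight]
      have h1 : ∏ _b : Bool, Perm.sign τ = Perm.sign τ * Perm.sign τ := by
        simp [Fintype.prod_bool]
      rw [h1, Int.units_mul_self, one_mul]
      congr 1
      funext l
      by_cases h : ss l = true <;>
        simp [h, Perm.sign_swap (by decide : (false : Bool) ≠ true)]
    rw [hsτ]
    push_cast
    rw [Finset.prod_congr rfl]
    intro l _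
    by_cases h : ss l = true <;> simp [h, hdd]
  -- factor values
  have hBval : ∀ k, B (w (π (k, false))) (w (π (k, true))) =
      dd k * B (w (mm k, false)) (w (mm k, true)) := by
    intro k
    rw [f1, f2]
    rcases h : ss k <;> simp [h, hdd, hBanti]
  have hOval : ∀ l, O (w (π (l, false))) (w (π (l, true))) = dd l * c (mm l) := by
    intro l
    rw [f1, f2]
    rcases h : ss l <;> simp [h, hdd, hc, hOanti]
  rw [hsgn, Finset.mul_sum]
  have step : ∀ k : Fin j,
      (∏ l : Fin j, dd l) * (B (w (π (k, false))) (w (π (k, true))) *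
        ∏ l ∈ univ.erase k, O (w (π (l, false))) (w (π (l, true))))
      = B (w (mm k, false)) (w (mm k, true)) * ∏ m' ∈ univ.erase (mm k), c m' := by
    intro k
    rw [hBval, Finset.prod_congr rfl (fun l _ => hOval l), Finset.prod_mul_distrib]
    have hP : (∏ l : Fin j, dd l) = dd k * ∏ l ∈ univ.erase k, dd l :=
      (Finset.mul_prod_erase univ dd (mem_univ k)).symm
    have hsq : ∀ l, dd l * dd l = 1 := by
      intro l; by_cases h : ss l = true <;> simp [h, hdd]
    have himg : ∏ l ∈ univ.erase k, c (mm l) = ∏ m' ∈ univ.erase (mm k), c m' := by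
      rw [← Finset.prod_image (fun a _ b _ h => inj h)]
      congr 1
      ext m'
      simp only [Finset.mem_image, Finset.mem_erase, Finset.mem_univ, and_true]
      constructor
      · rintro ⟨l, hl, rfl⟩
        exact fun he => hl (inj he)
      · intro hne
        obtain ⟨l, rfl⟩ := bij.surjective m'
        exact ⟨l, fun he => hne (by rw [he]), rfl⟩
    rw [himg, hP]
    have : (dd k * ∏ l ∈ univ.erase k, dd l) *
        (dd k * B (w (mm k, false)) (w (mm k, true)) *
          ((∏ l ∈ univ.erase k, dd l) * ∏ l ∈ univ.erase k, c (mm l)))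
        = ((dd k * dd k) * ((∏ l ∈ univ.erase k, dd l) * (∏ l ∈ univ.erase k, dd l))) *
          (B (w (mm k, false)) (w (mm k, true)) * ∏ l ∈ univ.erase k, c (mm l)) := by
      ring
    rw [himg] at this
    rw [this, hsq, ← Finset.prod_mul_distrib,
      Finset.prod_congr rfl (fun l _ => hsq l), Finset.prod_const_one, one_mul, one_mul]
  rw [Finset.sum_congr rfl (fun k _ => step k)]
  exact Fintype.sum_bijective mm bij _ _ (fun k => rfl)

lemma S2_eq {j : ℕ} (O B : α → α → ℝ) (w : Fin j × Bool → α) (c : Fin j → ℝ)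
    (hBanti : ∀ m, B (w (m, true)) (w (m, false)) = - B (w (m, false)) (w (m, true)))
    (hc : ∀ m, O (w (m, false)) (w (m, true)) = c m)
    (hOanti : ∀ m, O (w (m, true)) (w (m, false)) = - c m)
    (hoff : ∀ (m m' : Fin j) (s s' : Bool), m ≠ m' → O (w (m, s)) (w (m', s')) = 0) :
    S2 O B w = ((univ.filter (matched (j := j))).card : ℝ) *
      ∑ m : Fin j, B (w (m, false)) (w (m, true)) * ∏ m' ∈ univ.erase m, c m' := by
  classical
  rw [S2, ← Finset.sum_filter_add_sum_filter_not univ (matched (j := j))]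
  have h2 : ∑ π ∈ univ.filter (fun π => ¬ matched (j := j) π),
      ((Perm.sign π : ℤ) : ℝ) *
        ∑ k : Fin j, B (w (π (k, false))) (w (π (k, true))) *
          ∏ l ∈ univ.erase k, O (w (π (l, false))) (w (π (l, true))) = 0 := by
    refine Finset.sum_eq_zero fun π hπ => ?_
    have hnm : ¬ matched π := (Finset.mem_filter.mp hπ).2
    have hinner : ∀ k : Fin j,
        B (w (π (k, false))) (w (π (k, true))) *
          ∏ l ∈ univ.erase k, O (w (π (l, false))) (w (π (l, true))) = 0 := by
      intro k
      obtain ⟨l, hlk, hl⟩ := exists_mismatch hnm k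
      have hz : O (w (π (l, false))) (w (π (l, true))) = 0 := by
        have := hoff (π (l, false)).1 (π (l, true)).1 (π (l, false)).2 (π (l, true)).2 hl
        rwa [Prod.mk.eta, Prod.mk.eta] at this
      rw [Finset.prod_eq_zero (Finset.mem_erase.mpr ⟨hlk, Finset.mem_univ l⟩) hz, mul_zero]
    rw [Finset.sum_congr rfl (fun k _ => hinner k), Finset.sum_const_zero, mul_zero]
  rw [h2, add_zero,
    Finset.sum_congr rfl
      (fun π hπ => matched_eval O B w c hBanti hc hOanti (Finset.mem_filter.mp hπ).2),
    Finset.sum_const, nsmul_eq_mul]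

lemma card_matched_pos {j : ℕ} : 0 < (univ.filter (matched (j := j))).card :=
  Finset.card_pos.mpr ⟨1, Finset.mem_filter.mpr ⟨Finset.mem_univ _, fun _ => rfl⟩⟩

/-- The key algebraic consequence: if `S2 O B w = 0` then the "Lepage value" vanishes. -/
lemma lepage_value_eq_zero {j : ℕ} (O B : α → α → ℝ) (w : Fin j × Bool → α) (c : Fin j → ℝ)
    (hBanti : ∀ m, B (w (m, true)) (w (m, false)) = - B (w (m, false)) (w (m, true)))
    (hc : ∀ m, O (w (m, false)) (w (m, true)) = c m)
    (hOanti : ∀ m, O (w (m, true)) (w (m, false)) = - c m)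
    (hoff : ∀ (m m' : Fin j) (s s' : Bool), m ≠ m' → O (w (m, s)) (w (m', s')) = 0)
    (hS : S2 O B w = 0) :
    ∑ m : Fin j, B (w (m, false)) (w (m, true)) * ∏ m' ∈ univ.erase m, c m' = 0 := by
  have := S2_eq O B w c hBanti hc hOanti hoff
  rw [hS] at this
  have hcard : ((univ.filter (matched (j := j))).card : ℝ) ≠ 0 := by
    have := card_matched_pos (j := j)
    positivity
  exact (mul_eq_zero.mp this.symm).resolve_left hcard

end KE2

section Darboux

universe u

open Submodule Module

def sumShift (n : ℕ) : (Fin 2 ⊕ (Fin n ⊕ Fin n)) ≃ (Fin (n + 1) ⊕ Fin (n + 1)) where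
  toFun := Sum.elim ![Sum.inl 0, Sum.inr 0]
    (Sum.elim (fun i => Sum.inl i.succ) (fun i => Sum.inr i.succ))
  invFun := Sum.elim (Fin.cases (Sum.inl 0) fun i => Sum.inr (Sum.inl i))
    (Fin.cases (Sum.inl 1) fun i => Sum.inr (Sum.inr i))
  left_inv := by
    rintro ((x : Fin 2) | (i | i))
    · fin_cases x <;> simp
    · simp
    · simp
  right_inv := by
    rintro ((p : Fin (n+1)) | (p : Fin (n+1))) <;>
      exact Fin.cases (by simp) (fun i => by simp) p

theorem exists_symplectic_basis :
    ∀ (n : ℕ) (E : Type u) [AddCommGroup E] [Module ℝ E] [FiniteDimensional ℝ E]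
      (Ω : LinearMap.BilinForm ℝ E), Ω.IsAlt → Ω.Nondegenerate →
      Module.finrank ℝ E = 2 * n →
      ∃ bas : Basis (Fin n ⊕ Fin n) ℝ E,
        (∀ i k, Ω (bas (Sum.inl i)) (bas (Sum.inl k)) = 0) ∧
        (∀ i k, Ω (bas (Sum.inr i)) (bas (Sum.inr k)) = 0) ∧
        (∀ i k, Ω (bas (Sum.inl i)) (bas (Sum.inr k)) = if i = k then 1 else 0) := by
  intro n
  induction n with
  | zero =>
    intro E _ _ _ Ω halt hnd hdim
    have hsub : Subsingleton E := by
      rw [← Module.finrank_zero_iff (R := ℝ) (M := E)]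
      omega
    exact ⟨Basis.empty E, fun i => i.elim0, fun i => i.elim0, fun i => i.elim0⟩
  | succ n ih =>
    intro E _ _ _ Ω halt hnd hdim
    have hrefl : Ω.IsRefl := halt.isRefl
    have hpos : 0 < Module.finrank ℝ E := by omega
    have : Nontrivial E := Module.nontrivial_of_finrank_pos hpos
    obtain ⟨u, hu⟩ := exists_ne (0 : E)
    have hex : ¬ ∀ w, Ω u w = 0 := fun h => hu (hnd.1 u h)
    push_neg at hex
    obtain ⟨w0, hw0⟩ := hex
    set f : E := (Ω u w0)⁻¹ • w0 with hf
    have huf : Ω u f = 1 := by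
      rw [hf, map_smul, smul_eq_mul, inv_mul_cancel₀ hw0]
    have hfu : Ω f u = -1 := by
      have := halt.neg_eq u f
      rw [huf] at this
      linarith [this]
    have hli : LinearIndependent ℝ ![u, f] := by
      rw [LinearIndependent.pair_iff' hu]
      intro a ha
      have : Ω u (a • u) = 0 := by rw [map_smul, smul_eq_mul, halt u, mul_zero]
      rw [ha, huf] at this
      exact one_ne_zero this
    set W : Submodule ℝ E := span ℝ (Set.range ![u, f]) with hW
    have hrange : Set.range ![u, f] = {u, f} := by
      simp [Matrix.range_cons, Matrix.range_empty]
      exact Set.pair_comm f u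
    have hmemu : u ∈ W := subset_span (by rw [hrange]; exact Set.mem_insert _ _)
    have hmemf : f ∈ W := subset_span (by rw [hrange]; exact Set.mem_insert_of_mem _ rfl)
    have hWnd : (Ω.restrict W).Nondegenerate := by
      refine (LinearMap.IsRefl.nondegenerate_iff_separatingLeft (B := Ω.restrict W)
        (fun a b h => hrefl _ _ h)).mpr ?_
      rintro ⟨x, hx⟩ hbot
      have hxu : Ω x u = 0 := hbot ⟨u, hmemu⟩
      have hxf : Ω x f = 0 := hbot ⟨f, hmemf⟩
      have hx' : x ∈ span ℝ {u, f} := by rwa [hW, hrange] at hx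
      obtain ⟨a, b, hab⟩ := Submodule.mem_span_pair.mp hx'
      have ha : a = 0 := by
        have h : Ω x f = a * Ω u f + b * Ω f f := by rw [← hab]; simp
        rw [hxf, huf, halt f, mul_zero, mul_one, add_zero] at h
        linarith [h]
      have hb : b = 0 := by
        have h : Ω x u = a * Ω u u + b * Ω f u := by rw [← hab]; simp
        rw [hxu, halt u, hfu, mul_zero, zero_add] at h
        linarith [h]
      have : x = 0 := by rw [← hab, ha, hb, zero_smul, zero_smul, add_zero]
      exact Subtype.ext this
    have hcompl : IsCompl W (Ω.orthogonal W) :=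
      Ω.isCompl_orthogonal_of_restrict_nondegenerate hrefl hWnd
    set Wp : Submodule ℝ E := Ω.orthogonal W with hWp
    have hWpnd : (Ω.restrict Wp).Nondegenerate := by
      refine (LinearMap.IsRefl.nondegenerate_iff_separatingLeft (B := Ω.restrict Wp)
        (fun a b h => hrefl _ _ h)).mpr ?_
      rintro ⟨x, hx⟩ hbot
      have : x = 0 := by
        refine hnd.1 x fun y => ?_
        have hy : y ∈ W ⊔ Wp := by rw [hcompl.sup_eq_top]; trivial
        obtain ⟨yw, hyw, yp, hyp, rfl⟩ := Submodule.mem_sup.mp hy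
        have h1 : Ω x yw = 0 := hrefl _ _ (hx yw hyw)
        have h2 : Ω x yp = 0 := hbot ⟨yp, hyp⟩
        rw [map_add, h1, h2, add_zero]
      exact Subtype.ext this
    have hfr2 : finrank ℝ W = 2 := by
      rw [hW, finrank_span_eq_card hli]
      simp
    have hfr : finrank ℝ Wp = 2 * n := by
      have := Submodule.finrank_add_eq_of_isCompl hcompl
      omega
    have hWpalt : (Ω.restrict Wp).IsAlt := fun x => halt x
    obtain ⟨bas', h1', h2', h3'⟩ := ih Wp (Ω.restrict Wp) hWpalt hWpnd hfr
    set basW : Basis (Fin 2) ℝ W := Basis.span hli with hbasW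
    set basE : Basis (Fin (n+1) ⊕ Fin (n+1)) ℝ E :=
      ((basW.prod bas').map (Submodule.prodEquivOfIsCompl W Wp hcompl)).reindex
        (sumShift n) with hbasE
    have hval : ∀ z, basE z =
        Sum.elim (fun (x : Fin 2) => ((basW x : W) : E))
          (Sum.elim (fun i => ((bas' (Sum.inl i) : Wp) : E))
            (fun i => ((bas' (Sum.inr i) : Wp) : E))) ((sumShift n).symm z) := by
      intro z
      rw [hbasE, Basis.reindex_apply, Basis.map_apply]
      rcases hsym : (sumShift n).symm z with x | (i | i) <;>
        simp [Submodule.coe_prodEquivOfIsCompl', Basis.prod_apply_inl_fst,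
          Basis.prod_apply_inl_snd, Basis.prod_apply_inr_fst, Basis.prod_apply_inr_snd]
    have hval0 : basE (Sum.inl 0) = u := by
      rw [hval]
      have : (sumShift n).symm (Sum.inl (0 : Fin (n+1))) = Sum.inl (0 : Fin 2) := by
        simp [sumShift]
      rw [this]
      exact congrArg Subtype.val (Module.Basis.span_apply hli 0)
    have hval1 : basE (Sum.inr 0) = f := by
      rw [hval]
      have : (sumShift n).symm (Sum.inr (0 : Fin (n+1))) = Sum.inl (1 : Fin 2) := by
        simp [sumShift]
      rw [this]
      exact congrArg Subtype.val (Module.Basis.span_apply hli 1)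
    have hvalL : ∀ i : Fin n, basE (Sum.inl i.succ) = ((bas' (Sum.inl i) : Wp) : E) := by
      intro i
      rw [hval]
      have : (sumShift n).symm (Sum.inl i.succ) = Sum.inr (Sum.inl i) := by
        simp [sumShift]
      rw [this]
      rfl
    have hvalR : ∀ i : Fin n, basE (Sum.inr i.succ) = ((bas' (Sum.inr i) : Wp) : E) := by
      intro i
      rw [hval]
      have : (sumShift n).symm (Sum.inr i.succ) = Sum.inr (Sum.inr i) := by
        simp [sumShift]
      rw [this]
      rfl
    -- orthogonality facts
    have horthu : ∀ x : Wp, Ω u (x : E) = 0 := fun x => x.2 u hmemu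
    have horthf : ∀ x : Wp, Ω f (x : E) = 0 := fun x => x.2 f hmemf
    have horthu' : ∀ x : Wp, Ω (x : E) u = 0 := fun x => hrefl _ _ (horthu x)
    have horthf' : ∀ x : Wp, Ω (x : E) f = 0 := fun x => hrefl _ _ (horthf x)
    refine ⟨basE, ?_, ?_, ?_⟩
    · intro i k
      refine Fin.cases ?_ (fun i' => ?_) i <;> refine Fin.cases ?_ (fun k' => ?_) k
      · rw [hval0]; exact halt u
      · rw [hval0, hvalL]; exact horthu _
      · rw [hval0, hvalL]; exact horthu' _
      · rw [hvalL, hvalL]; exact h1' i' k'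
    · intro i k
      refine Fin.cases ?_ (fun i' => ?_) i <;> refine Fin.cases ?_ (fun k' => ?_) k
      · rw [hval1]; exact halt f
      · rw [hval1, hvalR]; exact horthf _
      · rw [hval1, hvalR]; exact horthf' _
      · rw [hvalR, hvalR]; exact h2' i' k'
    · intro i k
      refine Fin.cases ?_ (fun i' => ?_) i <;> refine Fin.cases ?_ (fun k' => ?_) k
      · rw [hval0, hval1, if_pos rfl]; exact huf
      · rw [hval0, hvalR, if_neg (Ne.symm (Fin.succ_ne_zero k'))]
        exact horthu _
      · rw [hvalL, hval1, if_neg (Fin.succ_ne_zero i')]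
        exact horthf' _
      · rw [hvalL, hvalR]
        simp only [Fin.succ_inj]
        exact h3' i' k'
end Darboux

section PartC
open Finset

lemma exists_avoid {n j : ℕ} (hjn : j + 1 ≤ n) (a b : Fin n) :
    ∃ g : Fin j → Fin n, Function.Injective g ∧
      ∀ m : Fin j, (m : ℕ) ≠ 0 → g m ≠ a ∧ g m ≠ b := by
  classical
  set s : Finset (Fin n) := Finset.univ \ {a, b} with hs
  have hscard : j - 1 ≤ s.card := by
    have h1 : (Finset.univ : Finset (Fin n)).card - ({a, b} : Finset (Fin n)).card ≤ s.card :=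
      Finset.le_card_sdiff _ _
    have h2 : ({a, b} : Finset (Fin n)).card ≤ 2 :=
      (Finset.card_insert_le _ _).trans (by simp)
    have h3 : (Finset.univ : Finset (Fin n)).card = n := by simp
    omega
  obtain ⟨t, hts, htc⟩ := Finset.exists_subset_card_eq hscard
  set iso := t.orderIsoOfFin htc with hiso
  refine ⟨fun m => if h : (m : ℕ) = 0 then a
    else (iso ⟨(m : ℕ) - 1, by have := m.isLt; omega⟩ : Fin n), ?_, ?_⟩
  · intro m1 m2 h
    simp only [] at h
    by_cases h1 : (m1 : ℕ) = 0 <;> by_cases h2 : (m2 : ℕ) = 0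
    · exact Fin.ext (by omega)
    · rw [dif_pos h1, dif_neg h2] at h
      have hmem := (iso ⟨(m2 : ℕ) - 1, by have := m2.isLt; omega⟩).2
      have := hts hmem
      rw [hs, Finset.mem_sdiff] at this
      exact absurd (by rw [← h]; exact Finset.mem_insert_self a {b}) this.2
    · rw [dif_neg h1, dif_pos h2] at h
      have hmem := (iso ⟨(m1 : ℕ) - 1, by have := m1.isLt; omega⟩).2
      have := hts hmem
      rw [hs, Finset.mem_sdiff] at this
      exact absurd (by rw [h]; exact Finset.mem_insert_self a {b}) this.2
    · rw [dif_neg h1, dif_neg h2] at h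
      have h4 := iso.injective (Subtype.ext h)
      have hv := congrArg Fin.val h4
      simp only [] at hv
      exact Fin.ext (by omega)
  · intro m hm
    simp only [] 
    rw [dif_neg hm]
    have hmem := (iso ⟨(m : ℕ) - 1, by have := m.isLt; omega⟩).2
    have := hts hmem
    rw [hs, Finset.mem_sdiff] at this
    constructor
    · intro he; exact this.2 (by rw [he]; exact Finset.mem_insert_self a {b})
    · intro he; exact this.2 (by rw [he]; simp)

theorem bilin_zero_of_S2 {E : Type u} [AddCommGroup E] [Module ℝ E] [FiniteDimensional ℝ E]
    {n j : ℕ} (hn : 1 < n) (hj1 : 1 ≤ j) (hjn : j < n)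
    (hdim : Module.finrank ℝ E = 2 * n)
    (Ω B : LinearMap.BilinForm ℝ E) (hΩalt : Ω.IsAlt) (hΩnd : Ω.Nondegenerate)
    (hBalt : B.IsAlt)
    (hS : ∀ w : Fin j × Bool → E, S2 (fun x y => Ω x y) (fun x y => B x y) w = 0) :
    B = 0 := by
  classical
  have hj0 : 0 < j := hj1
  set z0 : Fin j := ⟨0, hj0⟩ with hz0
  obtain ⟨bas, hEE, hFF, hEF⟩ := exists_symplectic_basis n E Ω hΩalt hΩnd hdim
  set Ee : Fin n → E := fun i => bas (Sum.inl i) with hEe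
  set Ff : Fin n → E := fun i => bas (Sum.inr i) with hFf
  have hskewΩ : ∀ x y : E, Ω y x = - Ω x y := fun x y => (hΩalt.neg_eq x y).symm
  have hEE' : ∀ i k, Ω (Ee i) (Ee k) = 0 := hEE
  have hFF' : ∀ i k, Ω (Ff i) (Ff k) = 0 := hFF
  have hEF' : ∀ i k, Ω (Ee i) (Ff k) = if i = k then 1 else 0 := hEF
  have hFE' : ∀ i k, Ω (Ff i) (Ee k) = if k = i then -1 else 0 := by
    intro i k
    rw [show Ω (Ff i) (Ee k) = - Ω (Ee k) (Ff i) from (hΩalt.neg_eq _ _).symm, hEF]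
    by_cases h : k = i <;> simp [h]
  have hskewB : ∀ x y : E, B y x = - B x y := fun x y => (hBalt.neg_eq x y).symm
  -- off-diagonal key lemma
  have key0 : ∀ (z z' : E), Ω z z' = 0 →
      ∀ g : Fin j → Fin n, Function.Injective g →
      (∀ m : Fin j, (m : ℕ) ≠ 0 →
        Ω z (Ee (g m)) = 0 ∧ Ω z (Ff (g m)) = 0 ∧
          Ω z' (Ee (g m)) = 0 ∧ Ω z' (Ff (g m)) = 0) →
      B z z' = 0 := by
    intro z z' hzz' g hginj hgorth
    set w : Fin j × Bool → E := fun p =>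
      if (p.1 : ℕ) = 0 then (if p.2 then z' else z)
      else (if p.2 then Ff (g p.1) else Ee (g p.1)) with hw
    set c : Fin j → ℝ := fun m => if (m : ℕ) = 0 then 0 else 1 with hc'
    have hwmf : ∀ m : Fin j, (m : ℕ) ≠ 0 → w (m, false) = Ee (g m) := by
      intro m h; simp [hw, h]
    have hwmt : ∀ m : Fin j, (m : ℕ) ≠ 0 → w (m, true) = Ff (g m) := by
      intro m h; simp [hw, h]
    have hw0f : ∀ m : Fin j, (m : ℕ) = 0 → w (m, false) = z := by
      intro m h; simp [hw, h]
    have hw0t : ∀ m : Fin j, (m : ℕ) = 0 → w (m, true) = z' := by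
      intro m h; simp [hw, h]
    have hBanti : ∀ m : Fin j, B (w (m, true)) (w (m, false))
        = - B (w (m, false)) (w (m, true)) := fun m => hskewB _ _
    have hcm : ∀ m : Fin j, Ω (w (m, false)) (w (m, true)) = c m := by
      intro m
      by_cases h : (m : ℕ) = 0
      · rw [hw0f m h, hw0t m h, hzz']; simp [hc', h]
      · rw [hwmf m h, hwmt m h, hEF', if_pos rfl]; simp [hc', h]
    have hOanti : ∀ m : Fin j, Ω (w (m, true)) (w (m, false)) = - c m := by
      intro m; rw [hskewΩ, hcm]
    have hoff : ∀ (m m' : Fin j) (st st' : Bool), m ≠ m' →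
        Ω (w (m, st)) (w (m', st')) = 0 := by
      intro m m' st st' hmm'
      by_cases h : (m : ℕ) = 0 <;> by_cases h' : (m' : ℕ) = 0
      · exact absurd (Fin.ext (by omega)) hmm'
      · rcases hgorth m' h' with ⟨o1, o2, o3, o4⟩
        cases st <;> cases st'
        · rw [hw0f m h, hwmf m' h']; exact o1
        · rw [hw0f m h, hwmt m' h']; exact o2
        · rw [hw0t m h, hwmf m' h']; exact o3
        · rw [hw0t m h, hwmt m' h']; exact o4
      · rcases hgorth m h with ⟨o1, o2, o3, o4⟩
        cases st <;> cases st'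
        · rw [hwmf m h, hw0f m' h', hskewΩ, o1, neg_zero]
        · rw [hwmf m h, hw0t m' h', hskewΩ, o3, neg_zero]
        · rw [hwmt m h, hw0f m' h', hskewΩ, o2, neg_zero]
        · rw [hwmt m h, hw0t m' h', hskewΩ, o4, neg_zero]
      · have hgne : g m ≠ g m' := fun he => hmm' (hginj he)
        have hgne' : g m' ≠ g m := fun he => hgne he.symm
        cases st <;> cases st'
        · rw [hwmf m h, hwmf m' h']; exact hEE' _ _
        · rw [hwmf m h, hwmt m' h', hEF', if_neg hgne]
        · rw [hwmt m h, hwmf m' h', hFE', if_neg hgne']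
        · rw [hwmt m h, hwmt m' h']; exact hFF' _ _
    have hval := lepage_value_eq_zero (fun x y => Ω x y) (fun x y => B x y) w c
      hBanti hcm hOanti hoff (hS w)
    -- now evaluate the sum
    have hsum : ∑ m : Fin j,
        B (w (m, false)) (w (m, true)) * ∏ m' ∈ univ.erase m, c m'
        = B z z' := by
      rw [Finset.sum_eq_single z0]
      · rw [hw0f z0 rfl, hw0t z0 rfl]
        have hone : ∏ m' ∈ univ.erase z0, c m' = 1 := by
          refine Finset.prod_eq_one fun m' hm' => ?_
          have h1 : m' ≠ z0 := (Finset.mem_erase.mp hm').1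
          have h2 : (m' : ℕ) ≠ 0 := fun he => h1 (Fin.ext (by rw [he]))
          simp [hc', h2]
        rw [hone, mul_one]
      · intro m _ hm
        have hm0 : z0 ∈ univ.erase m :=
          Finset.mem_erase.mpr ⟨fun he => hm (by rw [← he]), Finset.mem_univ _⟩
        rw [Finset.prod_eq_zero hm0 (by simp [hc', hz0]), mul_zero]
      · intro habs
        exact absurd (Finset.mem_univ z0) habs
    rw [hsum] at hval
    exact hval
  -- diagonal key lemma
  have keyD : ∀ h : Fin j → Fin n, Function.Injective h →
      ∑ m : Fin j, B (Ee (h m)) (Ff (h m)) = 0 := by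
    intro h hinj
    set w : Fin j × Bool → E := fun p => if p.2 then Ff (h p.1) else Ee (h p.1) with hw
    have hwf : ∀ m : Fin j, w (m, false) = Ee (h m) := fun m => by simp [hw]
    have hwt : ∀ m : Fin j, w (m, true) = Ff (h m) := fun m => by simp [hw]
    have hcm : ∀ m : Fin j, Ω (w (m, false)) (w (m, true)) = 1 := by
      intro m; rw [hwf, hwt, hEF', if_pos rfl]
    have hOanti : ∀ m : Fin j, Ω (w (m, true)) (w (m, false)) = -1 := by
      intro m; rw [hskewΩ, hcm]
    have hoff : ∀ (m m' : Fin j) (st st' : Bool), m ≠ m' →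
        Ω (w (m, st)) (w (m', st')) = 0 := by
      intro m m' st st' hmm'
      have hgne : h m ≠ h m' := fun he => hmm' (hinj he)
      have hgne' : h m' ≠ h m := fun he => hgne he.symm
      cases st <;> cases st'
      · rw [hwf, hwf]; exact hEE' _ _
      · rw [hwf, hwt, hEF', if_neg hgne]
      · rw [hwt, hwf, hFE', if_neg hgne']
      · rw [hwt, hwt]; exact hFF' _ _
    have hval := lepage_value_eq_zero (fun x y => Ω x y) (fun x y => B x y) w
      (fun _ => 1)
      (fun m => hskewB _ _)
      hcm hOanti hoff
      (hS w)
    simpa [hwf, hwt] using hval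
  have hdiag_eq : ∀ p q : Fin n, B (Ee p) (Ff p) = B (Ee q) (Ff q) := by
    intro p q
    by_cases hpq : p = q
    · rw [hpq]
    · obtain ⟨g, hginj, hgav⟩ := exists_avoid (by omega : j + 1 ≤ n) p q
      set h1 : Fin j → Fin n := fun m => if (m : ℕ) = 0 then p else g m with hh1
      set h2 : Fin j → Fin n := fun m => if (m : ℕ) = 0 then q else g m with hh2
      have hinj : ∀ (x : Fin n), x = p ∨ x = q →
          Function.Injective (fun m : Fin j => if (m : ℕ) = 0 then x else g m) := by
        intro x hx m1 m2 he
        by_cases e1 : (m1 : ℕ) = 0 <;> by_cases e2 : (m2 : ℕ) = 0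
        · exact Fin.ext (by omega)
        · simp only [if_pos e1, if_neg e2] at he
          rcases hgav m2 e2 with ⟨ha, hb⟩
          rcases hx with rfl | rfl
          · exact absurd he.symm ha
          · exact absurd he.symm hb
        · simp only [if_neg e1, if_pos e2] at he
          rcases hgav m1 e1 with ⟨ha, hb⟩
          rcases hx with rfl | rfl
          · exact absurd he ha
          · exact absurd he hb
        · simp only [if_neg e1, if_neg e2] at he
          exact hginj he
      have k1 := keyD h1 (hinj p (Or.inl rfl))
      have k2 := keyD h2 (hinj q (Or.inr rfl))
      have hsub : ∑ m : Fin j,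
          (B (Ee (h1 m)) (Ff (h1 m)) - B (Ee (h2 m)) (Ff (h2 m))) = 0 := by
        rw [Finset.sum_sub_distrib, k1, k2, sub_zero]
      rw [Finset.sum_eq_single z0] at hsub
      · simp only [hh1, hh2, hz0, if_pos rfl] at hsub
        linarith [hsub]
      · intro m _ hm
        have hm0 : (m : ℕ) ≠ 0 := fun he => hm (Fin.ext (by rw [he]))
        simp only [hh1, hh2, if_neg hm0, sub_self]
      · intro habs
        exact absurd (Finset.mem_univ z0) habs
  have hdiag : ∀ p : Fin n, B (Ee p) (Ff p) = 0 := by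
    intro p
    obtain ⟨g, hginj, hgav⟩ := exists_avoid (by omega : j + 1 ≤ n) p p
    set h1 : Fin j → Fin n := fun m => if (m : ℕ) = 0 then p else g m with hh1
    have hinj : Function.Injective h1 := by
      intro m1 m2 he
      by_cases e1 : (m1 : ℕ) = 0 <;> by_cases e2 : (m2 : ℕ) = 0
      · exact Fin.ext (by omega)
      · simp only [hh1, if_pos e1, if_neg e2] at he
        exact absurd he.symm (hgav m2 e2).1
      · simp only [hh1, if_neg e1, if_pos e2] at he
        exact absurd he (hgav m1 e1).1
      · simp only [hh1, if_neg e1, if_neg e2] at he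
        exact hginj he
    have k1 := keyD h1 hinj
    have hall : ∀ m : Fin j, B (Ee (h1 m)) (Ff (h1 m)) = B (Ee p) (Ff p) :=
      fun m => hdiag_eq (h1 m) p
    rw [Finset.sum_congr rfl (fun m _ => hall m), Finset.sum_const,
      Finset.card_univ, Fintype.card_fin, nsmul_eq_mul] at k1
    have hjne : (j : ℝ) ≠ 0 := by positivity
    exact (mul_eq_zero.mp k1).resolve_left hjne
  -- all basis values vanish
  have hEEz : ∀ a b : Fin n, B (Ee a) (Ee b) = 0 := by
    intro a b
    by_cases hab : a = b
    · rw [hab]; exact hBalt (Ee b)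
    · obtain ⟨g, hginj, hgav⟩ := exists_avoid (by omega : j + 1 ≤ n) a b
      refine key0 (Ee a) (Ee b) (hEE' a b) g hginj fun m hm => ?_
      rcases hgav m hm with ⟨ha, hb⟩
      have ha' : a ≠ g m := fun he => ha he.symm
      have hb' : b ≠ g m := fun he => hb he.symm
      exact ⟨hEE' a (g m), by rw [hEF', if_neg ha'], hEE' b (g m), by rw [hEF', if_neg hb']⟩
  have hFFz : ∀ a b : Fin n, B (Ff a) (Ff b) = 0 := by
    intro a b
    by_cases hab : a = b
    · rw [hab]; exact hBalt (Ff b)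
    · obtain ⟨g, hginj, hgav⟩ := exists_avoid (by omega : j + 1 ≤ n) a b
      refine key0 (Ff a) (Ff b) (hFF' a b) g hginj fun m hm => ?_
      rcases hgav m hm with ⟨ha, hb⟩
      have hga : g m ≠ a := ha
      have hgb : g m ≠ b := hb
      refine ⟨?_, hFF' a (g m), ?_, hFF' b (g m)⟩
      · rw [hskewΩ, hEF', if_neg hga, neg_zero]
      · rw [hskewΩ, hEF', if_neg hgb, neg_zero]
  have hEFz : ∀ a b : Fin n, a ≠ b → B (Ee a) (Ff b) = 0 := by
    intro a b hab
    obtain ⟨g, hginj, hgav⟩ := exists_avoid (by omega : j + 1 ≤ n) a b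
    refine key0 (Ee a) (Ff b) (by rw [hEF', if_neg hab]) g hginj fun m hm => ?_
    rcases hgav m hm with ⟨ha, hb⟩
    have ha' : a ≠ g m := fun he => ha he.symm
    have hgb : g m ≠ b := hb
    refine ⟨hEE' a (g m), by rw [hEF', if_neg ha'], ?_, hFF' b (g m)⟩
    · rw [hskewΩ, hEF', if_neg hgb, neg_zero]
  have hFEz : ∀ a b : Fin n, B (Ff a) (Ee b) = 0 := by
    intro a b
    rw [hskewB]
    by_cases hab : b = a
    · rw [hab, hdiag, neg_zero]
    · rw [hEFz b a hab, neg_zero]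
  -- conclude
  refine LinearMap.ext_basis bas bas ?_
  rintro (a | a) (b | b)
  · simpa using hEEz a b
  · by_cases hab : a = b
    · subst hab; simpa using hdiag a
    · simpa using hEFz a b hab
  · simpa using hFEz a b
  · simpa using hFFz a b
end PartC

section PartA
open Finset Equiv

lemma wpow_pair (j : ℕ) (O : E → E → ℝ) (u : Fin (2 * j) → E) :
    wpow j O u = (1 / (2:ℝ) ^ j) * ∑ σ : Perm (Fin (2 * j)),
      ((Perm.sign σ : ℤ) : ℝ) *
        ∏ k : Fin j, O (u (σ (pairEquiv j (k, false)))) (u (σ (pairEquiv j (k, true)))) := by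
  rfl

lemma lieD_wpow_eq (j : ℕ) (ω : E → E → E → ℝ)
    (hsm : ∀ u v : E, ContDiff ℝ (⊤ : ℕ∞) (fun x => ω x u v))
    (X : E → E) (x : E) (v : Fin (2 * j) → E) :
    lieD X (fun y => wpow j (ω y)) x v
      = (1 / (2:ℝ) ^ j) * ∑ σ : Perm (Fin (2 * j)),
          ((Perm.sign σ : ℤ) : ℝ) *
          ∑ k : Fin j,
            (fderiv ℝ (fun y => ω y (v (σ (pairEquiv j (k, false))))
                (v (σ (pairEquiv j (k, true))))) x (X x)
              + ω x (fderiv ℝ X x (v (σ (pairEquiv j (k, false)))))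
                  (v (σ (pairEquiv j (k, true))))
              + ω x (v (σ (pairEquiv j (k, false))))
                  (fderiv ℝ X x (v (σ (pairEquiv j (k, true)))))) *
            ∏ l ∈ Finset.univ.erase k,
              ω x (v (σ (pairEquiv j (l, false)))) (v (σ (pairEquiv j (l, true)))) := by
  classical
  have hdiff : ∀ u w : E, DifferentiableAt ℝ (fun y => ω y u w) x :=
    fun u w => ((hsm u w).differentiable (by simp)).differentiableAt
  set pe := pairEquiv j with hpe
  set c : Perm (Fin (2 * j)) → ℝ := fun σ => ((Perm.sign σ : ℤ) : ℝ) with hcdef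
  set A : Perm (Fin (2 * j)) → Fin j → E := fun σ k => v (σ (pe (k, false))) with hA
  set Bv : Perm (Fin (2 * j)) → Fin j → E := fun σ k => v (σ (pe (k, true))) with hBv
  set DX := fderiv ℝ X x with hDX
  -- derivative part
  have hprod : ∀ σ : Perm (Fin (2 * j)),
      HasFDerivAt (fun y => ∏ k : Fin j, ω y (A σ k) (Bv σ k))
        (∑ k : Fin j, (∏ l ∈ Finset.univ.erase k, ω x (A σ l) (Bv σ l)) •
          fderiv ℝ (fun y => ω y (A σ k) (Bv σ k)) x) x :=
    fun σ => HasFDerivAt.finset_prod (fun k _ => (hdiff _ _).hasFDerivAt)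
  have hF : HasFDerivAt (fun y => wpow j (ω y) v)
      ((1 / (2:ℝ) ^ j) • ∑ σ : Perm (Fin (2 * j)), c σ •
        (∑ k : Fin j, (∏ l ∈ Finset.univ.erase k, ω x (A σ l) (Bv σ l)) •
          fderiv ℝ (fun y => ω y (A σ k) (Bv σ k)) x)) x := by
    have h1 : HasFDerivAt
        (fun y => ∑ σ : Perm (Fin (2 * j)), c σ * ∏ k : Fin j, ω y (A σ k) (Bv σ k))
        (∑ σ : Perm (Fin (2 * j)), c σ •
          (∑ k : Fin j, (∏ l ∈ Finset.univ.erase k, ω x (A σ l) (Bv σ l)) •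
            fderiv ℝ (fun y => ω y (A σ k) (Bv σ k)) x)) x :=
      HasFDerivAt.fun_sum (fun σ _ => (hprod σ).const_mul (c σ))
    have h2 := h1.const_mul ((1 : ℝ) / 2 ^ j)
    have heq : (fun y => wpow j (ω y) v) = fun y =>
        (1 / (2:ℝ) ^ j) * ∑ σ : Perm (Fin (2 * j)), c σ *
          ∏ k : Fin j, ω y (A σ k) (Bv σ k) :=
      funext fun y => wpow_pair j (ω y) v
    rw [heq]
    exact h2
  have hderiv : fderiv ℝ (fun y => wpow j (ω y) v) x (X x)
      = (1 / (2:ℝ) ^ j) * ∑ σ : Perm (Fin (2 * j)), c σ *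
          ∑ k : Fin j, (∏ l ∈ Finset.univ.erase k, ω x (A σ l) (Bv σ l)) *
            fderiv ℝ (fun y => ω y (A σ k) (Bv σ k)) x (X x) := by
    rw [hF.fderiv]
    simp [ContinuousLinearMap.sum_apply, smul_eq_mul, Finset.mul_sum]
  -- update part
  have hupdate : ∀ (σ : Perm (Fin (2 * j))) (k₀ : Fin j) (b : Bool) (u' : E),
      (∏ k : Fin j, ω x (Function.update v (σ (pe (k₀, b))) u' (σ (pe (k, false))))
        (Function.update v (σ (pe (k₀, b))) u' (σ (pe (k, true)))))
      = (if b then ω x (A σ k₀) u' else ω x u' (Bv σ k₀)) *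
          ∏ l ∈ Finset.univ.erase k₀, ω x (A σ l) (Bv σ l) := by
    intro σ k₀ b u'
    have hup : ∀ (r : Fin j × Bool),
        Function.update v (σ (pe (k₀, b))) u' (σ (pe r))
          = if r = (k₀, b) then u' else v (σ (pe r)) := by
      intro r
      rw [Function.update_apply]
      congr 1
      simp [Equiv.apply_eq_iff_eq, EmbeddingLike.apply_eq_iff_eq]
    rw [← Finset.mul_prod_erase Finset.univ _ (Finset.mem_univ k₀)]
    congr 1
    · rw [hup (k₀, false), hup (k₀, true)]
      cases b
      · simp [hBv]
      · simp [hA]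
    · refine Finset.prod_congr rfl fun l hl => ?_
      have hlne : l ≠ k₀ := (Finset.mem_erase.mp hl).1
      rw [hup (l, false), hup (l, true),
        if_neg (by simp [hlne]), if_neg (by simp [hlne])]
  have hupd : ∑ i : Fin (2 * j), wpow j (ω x) (Function.update v i (DX (v i)))
      = (1 / (2:ℝ) ^ j) * ∑ σ : Perm (Fin (2 * j)), c σ *
          ∑ k : Fin j,
            (ω x (DX (A σ k)) (Bv σ k) + ω x (A σ k) (DX (Bv σ k))) *
            ∏ l ∈ Finset.univ.erase k, ω x (A σ l) (Bv σ l) := by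
    have hstep : ∀ i : Fin (2 * j), wpow j (ω x) (Function.update v i (DX (v i)))
        = (1 / (2:ℝ) ^ j) * ∑ σ : Perm (Fin (2 * j)), c σ *
            ∏ k : Fin j, ω x (Function.update v i (DX (v i)) (σ (pe (k, false))))
              (Function.update v i (DX (v i)) (σ (pe (k, true)))) :=
      fun i => wpow_pair j (ω x) _
    rw [Finset.sum_congr rfl fun i _ => hstep i, ← Finset.mul_sum]
    congr 1
    rw [Finset.sum_comm]
    refine Finset.sum_congr rfl fun σ _ => ?_
    rw [← Finset.mul_sum]
    congr 1
    have hre : ∑ i : Fin (2 * j),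
        (∏ k : Fin j, ω x (Function.update v i (DX (v i)) (σ (pe (k, false))))
          (Function.update v i (DX (v i)) (σ (pe (k, true)))))
        = ∑ p : Fin j × Bool,
          (∏ k : Fin j, ω x
            (Function.update v (σ (pe p)) (DX (v (σ (pe p)))) (σ (pe (k, false))))
            (Function.update v (σ (pe p)) (DX (v (σ (pe p)))) (σ (pe (k, true))))) := by
      exact (Equiv.sum_comp (pe.trans (σ : Equiv _ _)) _).symm
    rw [hre, Fintype.sum_prod_type]
    refine Finset.sum_congr rfl fun k₀ _ => ?_
    rw [Fintype.sum_bool, hupdate σ k₀ true _, hupdate σ k₀ false _, ← add_mul]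
    congr 1
    simp [hA, hBv, add_comm]
  -- assemble
  rw [lieD]
  rw [hderiv, hupd, ← mul_add, ← Finset.sum_add_distrib]
  congr 1
  refine Finset.sum_congr rfl fun σ _ => ?_
  rw [← mul_add, ← Finset.sum_add_distrib]
  congr 1
  refine Finset.sum_congr rfl fun k _ => ?_
  simp only [hA, hBv]
  ring

end PartA

/-- on a symplectic manifold (modelled on a `2n`-dimensional real
vector space `E`) with `n > 1` and `1 ≤ j < n`, any vector field `X` with
`L_X(ω^j) = 0` already satisfies `L_X ω = 0`; hence the `ω^j`-preserving
vector fields coincide with the symplectic ones for `j < n`. -/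
theorem stmt8 [FiniteDimensional ℝ E] (n j : ℕ)
    (hdim : Module.finrank ℝ E = 2 * n) (hn : 1 < n) (hj1 : 1 ≤ j) (hjn : j < n)
    (ω : E → E → E → ℝ)
    (hsm : ∀ u v : E, ContDiff ℝ (⊤ : ℕ∞) (fun x => ω x u v))
    (haddl : ∀ x (a : ℝ) u u' w, ω x (a • u + u') w = a * ω x u w + ω x u' w)
    (haddr : ∀ x (a : ℝ) u w w', ω x u (a • w + w') = a * ω x u w + ω x u w')
    (halt : ∀ x u, ω x u u = 0)
    (hcl : ∀ x (v : Fin 3 → E),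
      extD (fun y (w : Fin 2 → E) => ω y (w 0) (w 1)) x v = 0)
    (hnd : ∀ x (u : E), u ≠ 0 → ∃ w, ω x u w ≠ 0)
    (X : E → E) (hX : ContDiff ℝ (⊤ : ℕ∞) X)
    (hLpow : ∀ x (v : Fin (2 * j) → E), lieD X (fun y => wpow j (ω y)) x v = 0) :
    ∀ x (w : Fin 2 → E), lieD X (fun y (w : Fin 2 → E) => ω y (w 0) (w 1)) x w = 0 := by
  classical
  intro x w
  -- pointwise algebraic properties of ω
  have hω0l : ∀ y w' : E, ω y 0 w' = 0 := by
    intro y w'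
    have h := haddl y 1 0 0 w'
    simp at h
    linarith [h]
  have hω0r : ∀ y u : E, ω y u 0 = 0 := by
    intro y u
    have h := haddr y 1 u 0 0
    simp at h
    linarith [h]
  have haddl' : ∀ y (u u' w' : E), ω y (u + u') w' = ω y u w' + ω y u' w' := by
    intro y u u' w'
    have h := haddl y 1 u u' w'
    simpa using h
  have haddr' : ∀ y (u w' w'' : E), ω y u (w' + w'') = ω y u w' + ω y u w'' := by
    intro y u w' w''
    have h := haddr y 1 u w' w''
    simpa using h
  have hsmull : ∀ y (a : ℝ) (u w' : E), ω y (a • u) w' = a * ω y u w' := by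
    intro y a u w'
    have h := haddl y a u 0 w'
    simpa [hω0l] using h
  have hsmulr : ∀ y (a : ℝ) (u w' : E), ω y u (a • w') = a * ω y u w' := by
    intro y a u w'
    have h := haddr y a u w' 0
    simpa [hω0r] using h
  have hanti : ∀ y (a b : E), ω y b a = - ω y a b := by
    intro y a b
    have h := halt y (a + b)
    rw [haddl' y a b (a + b), haddr' y a a b, haddr' y b a b, halt y a, halt y b] at h
    linarith [h]
  have hdiff : ∀ u w' : E, DifferentiableAt ℝ (fun y => ω y u w') x :=
    fun u w' => ((hsm u w').differentiable (by simp)).differentiableAt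
  -- derivative-term bilinearity
  have hDaddl : ∀ u u' w' : E,
      fderiv ℝ (fun y => ω y (u + u') w') x (X x)
        = fderiv ℝ (fun y => ω y u w') x (X x) + fderiv ℝ (fun y => ω y u' w') x (X x) := by
    intro u u' w'
    rw [show (fun y => ω y (u + u') w') = fun y => ω y u w' + ω y u' w' from
      funext fun y => haddl' y u u' w', fderiv_fun_add (hdiff u w') (hdiff u' w')]
    simp
  have hDaddr : ∀ u w' w'' : E,
      fderiv ℝ (fun y => ω y u (w' + w'')) x (X x)
        = fderiv ℝ (fun y => ω y u w') x (X x) + fderiv ℝ (fun y => ω y u w'') x (X x) := by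
    intro u w' w''
    rw [show (fun y => ω y u (w' + w'')) = fun y => ω y u w' + ω y u w'' from
      funext fun y => haddr' y u w' w'', fderiv_fun_add (hdiff u w') (hdiff u w'')]
    simp
  have hDsmull : ∀ (a : ℝ) (u w' : E),
      fderiv ℝ (fun y => ω y (a • u) w') x (X x) = a * fderiv ℝ (fun y => ω y u w') x (X x) := by
    intro a u w'
    rw [show (fun y => ω y (a • u) w') = fun y => a * ω y u w' from
      funext fun y => hsmull y a u w', fderiv_const_mul (hdiff u w') a]
    simp
  have hDsmulr : ∀ (a : ℝ) (u w' : E),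
      fderiv ℝ (fun y => ω y u (a • w')) x (X x) = a * fderiv ℝ (fun y => ω y u w') x (X x) := by
    intro a u w'
    rw [show (fun y => ω y u (a • w')) = fun y => a * ω y u w' from
      funext fun y => hsmulr y a u w', fderiv_const_mul (hdiff u w') a]
    simp
  -- the bilinear forms
  set ΩL : LinearMap.BilinForm ℝ E := LinearMap.mk₂ ℝ (fun u w' => ω x u w')
    (fun m m' n' => haddl' x m m' n')
    (fun c m n' => by simpa [smul_eq_mul] using hsmull x c m n')
    (fun m n' n'' => haddr' x m n' n'')
    (fun c m n' => by simpa [smul_eq_mul] using hsmulr x c m n') with hΩL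
  set Bf : E → E → ℝ := fun u w' =>
    fderiv ℝ (fun y => ω y u w') x (X x)
      + ω x (fderiv ℝ X x u) w' + ω x u (fderiv ℝ X x w') with hBfdef
  have hBfaddl : ∀ u u' w' : E, Bf (u + u') w' = Bf u w' + Bf u' w' := by
    intro u u' w'
    simp only [hBfdef, hDaddl, map_add, haddl' x]
    ring
  have hBfaddr : ∀ u w' w'' : E, Bf u (w' + w'') = Bf u w' + Bf u w'' := by
    intro u w' w''
    simp only [hBfdef, hDaddr, map_add, haddr' x]
    ring
  have hBfsmull : ∀ (a : ℝ) (u w' : E), Bf (a • u) w' = a * Bf u w' := by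
    intro a u w'
    simp only [hBfdef, hDsmull, map_smul, hsmull x]
    ring
  have hBfsmulr : ∀ (a : ℝ) (u w' : E), Bf u (a • w') = a * Bf u w' := by
    intro a u w'
    simp only [hBfdef, hDsmulr, map_smul, hsmulr x]
    ring
  have hBfalt : ∀ u : E, Bf u u = 0 := by
    intro u
    have h1 : (fun y => ω y u u) = fun _ => (0 : ℝ) := funext fun y => halt y u
    have h2 : fderiv ℝ (fun y => ω y u u) x (X x) = 0 := by
      rw [h1, fderiv_fun_const]
      simp
    have h3 : ω x (fderiv ℝ X x u) u = - ω x u (fderiv ℝ X x u) := hanti x u _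
    simp only [hBfdef, h2, h3]
    ring
  set BfL : LinearMap.BilinForm ℝ E := LinearMap.mk₂ ℝ Bf
    (fun m m' n' => hBfaddl m m' n')
    (fun c m n' => by simpa [smul_eq_mul] using hBfsmull c m n')
    (fun m n' n'' => hBfaddr m n' n'')
    (fun c m n' => by simpa [smul_eq_mul] using hBfsmulr c m n') with hBfL
  have hΩalt : ΩL.IsAlt := fun u => halt x u
  have hΩnd : ΩL.Nondegenerate := by
    refine (LinearMap.IsRefl.nondegenerate_iff_separatingLeft (B := ΩL) hΩalt.isRefl).mpr ?_
    intro m hm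
    by_contra hm0
    obtain ⟨w', hw'⟩ := hnd x m hm0
    exact hw' (hm w')
  have hBalt : BfL.IsAlt := fun u => hBfalt u
  -- S2 vanishes for all tuples
  have hS : ∀ wt : Fin j × Bool → E,
      S2 (fun a b => ΩL a b) (fun a b => BfL a b) wt = 0 := by
    intro wt
    set v : Fin (2 * j) → E := wt ∘ (pairEquiv j).symm with hv
    have hzero := hLpow x v
    rw [lieD_wpow_eq j ω hsm X x v] at hzero
    have h2j : (1 / (2:ℝ) ^ j) ≠ 0 := by positivity
    have hsum0 := (mul_eq_zero.mp hzero).resolve_left h2j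
    have htrans : S2 (fun a b => ΩL a b) (fun a b => BfL a b) wt
        = ∑ σ : Equiv.Perm (Fin (2 * j)),
          ((Equiv.Perm.sign σ : ℤ) : ℝ) *
          ∑ k : Fin j,
            (fderiv ℝ (fun y => ω y (v (σ (pairEquiv j (k, false))))
                (v (σ (pairEquiv j (k, true))))) x (X x)
              + ω x (fderiv ℝ X x (v (σ (pairEquiv j (k, false)))))
                  (v (σ (pairEquiv j (k, true))))
              + ω x (v (σ (pairEquiv j (k, false))))
                  (fderiv ℝ X x (v (σ (pairEquiv j (k, true)))))) *
            ∏ l ∈ Finset.univ.erase k,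
              ω x (v (σ (pairEquiv j (l, false)))) (v (σ (pairEquiv j (l, true)))) := by
      rw [S2, ← Equiv.sum_comp (Equiv.permCongr (pairEquiv j).symm)]
      refine Finset.sum_congr rfl fun σ _ => ?_
      rw [Equiv.Perm.sign_permCongr]
      rfl
    rw [htrans]
    exact hsum0
  -- apply the Lepage divisibility result
  have hB0 : BfL = 0 := bilin_zero_of_S2 hn hj1 hjn hdim ΩL BfL hΩalt hΩnd hBalt hS
  have hBf : ∀ u w' : E, Bf u w' = 0 := by
    intro u w'
    have h := congrFun (congrArg (fun (L : LinearMap.BilinForm ℝ E) => fun a b => L a b) hB0)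
    have h2 : BfL u w' = 0 := by rw [hB0]; rfl
    exact h2
  have h := hBf (w 0) (w 1)
  simp only [lieD, Fin.sum_univ_two]
  have e00 : Function.update w 0 (fderiv ℝ X x (w 0)) 0 = fderiv ℝ X x (w 0) := by simp
  have e01 : Function.update w 0 (fderiv ℝ X x (w 0)) 1 = w 1 := by
    simp [Function.update_apply]
  have e10 : Function.update w 1 (fderiv ℝ X x (w 1)) 0 = w 0 := by
    simp [Function.update_apply]
  have e11 : Function.update w 1 (fderiv ℝ X x (w 1)) 1 = fderiv ℝ X x (w 1) := by simp
  rw [e00, e01, e10, e11]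
  simp only [hBfdef] at h
  linarith [h]


end Stmt8
end

section
/- The group of polynomial automorphisms of ℂ^n (n ≥ 2) with Jacobian determinant 1 acts k-transitively on ℂ^n for every k ∈ ℕ: given pairwise distinct points p_1,...,p_k and pairwise distinct points q_1,...,q_k in ℂ^n, there exists a polynomial automorphism φ of ℂ^n with constant Jacobian determinant 1 such that φ(p_i) = q_i for all i. -/
/-!
Two families of automorphisms with Jacobian determinant one suffice: `SL n ℂ`, and the shears
`x ↦ x + (f j (x a))ⱼ` with `f a = 0`. By Lagrange interpolation, a shear moves any tuple whose
`a`-th coordinates are pairwise distinct to any tuple with the same `a`-th coordinates. A generic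
matrix with first row `(1, t, t², …)` separates the first coordinates of `p`, after which one shear
puts `p` on the first axis. On that axis, three shears through a second coordinate carrying the
labels `0, …, k - 1` move `(xᵢ)` to any other injective `(yᵢ)`. These automorphisms, together with
their inverses, form a group, so `p` and `q` lie in the same orbit.
-/

/-- `φ : ℂⁿ → ℂⁿ` is a polynomial map. -/
def IsPolyMap (n : ℕ) (φ : (Fin n → ℂ) → (Fin n → ℂ)) : Prop :=
  ∃ P : Fin n → MvPolynomial (Fin n) ℂ, ∀ x i, φ x i = MvPolynomial.eval x (P i)

/-- `φ` is a polynomial automorphism of `ℂⁿ` (bijective polynomial map with a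
polynomial inverse) whose Jacobian determinant is constantly `1`. -/
def IsPolyAutDetOne (n : ℕ) (φ : (Fin n → ℂ) → (Fin n → ℂ)) : Prop :=
  ∃ P : Fin n → MvPolynomial (Fin n) ℂ,
    (∀ x i, φ x i = MvPolynomial.eval x (P i)) ∧
    (∃ ψ : (Fin n → ℂ) → (Fin n → ℂ), IsPolyMap n ψ ∧
      Function.LeftInverse ψ φ ∧ Function.RightInverse ψ φ) ∧
    Matrix.det (Matrix.of fun i j : Fin n => MvPolynomial.pderiv j (P i)) = 1

open MvPolynomial MulAction
open scoped Matrix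

namespace MvPolynomial

variable {ι σ τ R : Type*} [CommSemiring R]

noncomputable def jacobian (P : ι → MvPolynomial σ R) : Matrix ι σ (MvPolynomial σ R) :=
  Matrix.of fun i j => pderiv j (P i)

theorem eval_bind₁ (x : τ → R) (Q : σ → MvPolynomial τ R) (p : MvPolynomial σ R) :
    eval x (bind₁ Q p) = eval (fun i => eval x (Q i)) p :=
  eval₂Hom_bind₁ _ _ _ _

theorem pderiv_bind₁ [Fintype σ] (Q : σ → MvPolynomial τ R) (p : MvPolynomial σ R) (j : τ) :
    pderiv j (bind₁ Q p) = ∑ i, bind₁ Q (pderiv i p) * pderiv j (Q i) := by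
  classical
  induction p using MvPolynomial.induction_on with
  | C a => simp
  | add f g hf hg => simp only [map_add, hf, hg, add_mul, Finset.sum_add_distrib]
  | mul_X f i hf =>
    simp [pderiv_X, Pi.single_apply, add_mul, Finset.sum_add_distrib, hf, Finset.mul_sum,
      apply_ite (bind₁ Q), mul_assoc]

theorem jacobian_bind₁ [Fintype σ] (P : ι → MvPolynomial σ R) (Q : σ → MvPolynomial τ R) :
    jacobian (fun i => bind₁ Q (P i)) = (jacobian P).map (bind₁ Q) * jacobian Q :=
  Matrix.ext fun i j => pderiv_bind₁ Q (P i) j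

end MvPolynomial

section PolyAut

variable {n : ℕ}

theorem IsPolyMap.comp {φ ψ : (Fin n → ℂ) → (Fin n → ℂ)} (hφ : IsPolyMap n φ)
    (hψ : IsPolyMap n ψ) : IsPolyMap n (φ ∘ ψ) := by
  obtain ⟨P, hP⟩ := hφ
  obtain ⟨Q, hQ⟩ := hψ
  refine ⟨fun i => bind₁ Q (P i), fun x i => ?_⟩
  simp only [eval_bind₁, ← hQ, Function.comp_apply, hP]

theorem IsPolyAutDetOne.comp {φ ψ : (Fin n → ℂ) → (Fin n → ℂ)}
    (hφ : IsPolyAutDetOne n φ) (hψ : IsPolyAutDetOne n ψ) : IsPolyAutDetOne n (φ ∘ ψ) := by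
  obtain ⟨P, hP, ⟨φ', hφ', hφl, hφr⟩, hPdet⟩ := hφ
  obtain ⟨Q, hQ, ⟨ψ', hψ', hψl, hψr⟩, hQdet⟩ := hψ
  refine ⟨fun i => bind₁ Q (P i), fun x i => ?_,
    ⟨ψ' ∘ φ', hψ'.comp hφ', hφl.comp hψl, hφr.comp hψr⟩, ?_⟩
  · simp only [eval_bind₁, ← hQ, Function.comp_apply, hP]
  · change (jacobian _).det = 1 at hPdet hQdet ⊢
    rw [jacobian_bind₁, Matrix.det_mul, hQdet, mul_one, ← AlgHom.coe_toRingHom,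
      ← RingHom.mapMatrix_apply, ← RingHom.map_det, hPdet, map_one]

theorem isPolyAutDetOne_id : IsPolyAutDetOne n id := by
  classical
  refine ⟨X, fun x i => by simp, ⟨id, ⟨X, fun x i => by simp⟩, fun _ => rfl, fun _ => rfl⟩, ?_⟩
  change (jacobian X).det = 1
  have : jacobian (X : Fin n → MvPolynomial (Fin n) ℂ) = 1 := by
    ext i j
    simp [jacobian, pderiv_X, Matrix.one_apply, Pi.single_apply]
  rw [this, Matrix.det_one]

theorem Equiv.Perm.isPolyAutDetOne (σ : Equiv.Perm (Fin n → ℂ))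
    (P : Fin n → MvPolynomial (Fin n) ℂ) (hP : ∀ x i, σ x i = eval x (P i))
    (hdet : (jacobian P).det = 1) (hσ : IsPolyMap n σ.symm) : IsPolyAutDetOne n σ :=
  ⟨P, hP, ⟨σ.symm, hσ, σ.left_inv, σ.right_inv⟩, hdet⟩

/-- Asking the inverse to have Jacobian determinant one as well makes this a group without proving
that inverses of such automorphisms automatically have it. -/
def polyAutDetOne (n : ℕ) : Subgroup (Equiv.Perm (Fin n → ℂ)) where
  carrier := {σ | IsPolyAutDetOne n σ ∧ IsPolyAutDetOne n σ.symm}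
  one_mem' := ⟨isPolyAutDetOne_id, isPolyAutDetOne_id⟩
  mul_mem' hσ hτ := ⟨hσ.1.comp hτ.1, hτ.2.comp hσ.2⟩
  inv_mem' := And.symm

theorem mulVec_apply_eq_eval (M : Matrix (Fin n) (Fin n) ℂ) (x : Fin n → ℂ) (i : Fin n) :
    (M *ᵥ x) i = eval x (∑ j, C (M i j) * X j) := by
  simp [Matrix.mulVec, dotProduct]

theorem jacobian_sum_C_mul_X (M : Matrix (Fin n) (Fin n) ℂ) :
    jacobian (fun i => ∑ j, C (M i j) * X j) = M.map C := by
  classical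
  ext i j
  simp [jacobian, pderiv_X, Pi.single_apply]

theorem toLin'_mem_polyAutDetOne (A : Matrix.SpecialLinearGroup (Fin n) ℂ) :
    (Matrix.SpecialLinearGroup.toLin' A).toEquiv ∈ polyAutDetOne n := by
  have key : ∀ B : Matrix.SpecialLinearGroup (Fin n) ℂ,
      IsPolyAutDetOne n (Matrix.SpecialLinearGroup.toLin' B).toEquiv := fun B =>
    Equiv.Perm.isPolyAutDetOne _ _ (mulVec_apply_eq_eval (B : Matrix (Fin n) (Fin n) ℂ))
      (by rw [jacobian_sum_C_mul_X, ← RingHom.mapMatrix_apply, ← RingHom.map_det, B.2, map_one])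
      ⟨_, mulVec_apply_eq_eval ((B⁻¹ : Matrix.SpecialLinearGroup (Fin n) ℂ) :
        Matrix (Fin n) (Fin n) ℂ)⟩
  exact ⟨key A, key A⁻¹⟩

def shear (a : Fin n) (f : Fin n → Polynomial ℂ) (hf : f a = 0) : Equiv.Perm (Fin n → ℂ) where
  toFun x := x + fun j => (f j).eval (x a)
  invFun x := x - fun j => (f j).eval (x a)
  left_inv x := by ext j; simp [hf]
  right_inv x := by ext j; simp [hf]

theorem shear_symm (a : Fin n) (f : Fin n → Polynomial ℂ) (hf : f a = 0) :
    (shear a f hf).symm = shear a (-f) (by simp [hf]) := by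
  ext x j
  simp [shear, sub_eq_add_neg]

theorem shear_apply_eq_eval (a : Fin n) (f : Fin n → Polynomial ℂ) (hf : f a = 0)
    (x : Fin n → ℂ) (j : Fin n) :
    shear a f hf x j = eval x (X j + Polynomial.aeval (X a) (f j)) := by
  have := Polynomial.aeval_algHom_apply (aeval x) (X a) (f j)
  rw [aeval_X] at this
  simpa [shear] using this

theorem det_jacobian_shear (a : Fin n) (f : Fin n → Polynomial ℂ) (hf : f a = 0) :
    (jacobian fun j => (X j + Polynomial.aeval (X a) (f j) : MvPolynomial (Fin n) ℂ)).det = 1 := by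
  classical
  have : (jacobian fun j => (X j + Polynomial.aeval (X a) (f j) : MvPolynomial (Fin n) ℂ)) =
      1 + Matrix.vecMulVec (fun j => Polynomial.aeval (X a) (Polynomial.derivative (f j)))
        (Pi.single a 1) := by
    ext i j : 1
    simp [jacobian, Derivation.map_aeval, pderiv_X, Matrix.one_apply, Pi.single_apply,
      Matrix.vecMulVec_apply, eq_comm]
  rw [this, Matrix.vecMulVec_eq Unit, Matrix.det_one_add_replicateCol_mul_replicateRow]
  simp [hf]

theorem shear_mem_polyAutDetOne (a : Fin n) (f : Fin n → Polynomial ℂ) (hf : f a = 0) :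
    shear a f hf ∈ polyAutDetOne n := by
  have key : ∀ g hg, IsPolyAutDetOne n (shear a g hg) := fun g hg =>
    Equiv.Perm.isPolyAutDetOne _ _ (shear_apply_eq_eval a g hg) (det_jacobian_shear a g hg)
      (by rw [shear_symm]; exact ⟨_, shear_apply_eq_eval a _ _⟩)
  exact ⟨key f hf, by rw [shear_symm]; exact key _ _⟩

end PolyAut

theorem MulAction.mem_orbit_trans {G α : Type*} [Group G] [MulAction G α] {a b c : α}
    (hab : b ∈ orbit G a) (hbc : c ∈ orbit G b) : c ∈ orbit G a :=
  orbit_eq_iff.mpr hab ▸ hbc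

theorem Polynomial.exists_eval_injective {K ι : Type*} [Field K] [Infinite K] [Finite ι]
    (f : ι → Polynomial K) (hf : Function.Injective f) :
    ∃ t, Function.Injective fun i => (f i).eval t := by
  classical
  have hS : (⋃ a, ⋃ b, {t : K | a ≠ b ∧ (f a).eval t = (f b).eval t}).Finite := by
    refine Set.finite_iUnion fun a => Set.finite_iUnion fun b => ?_
    by_cases hab : a = b
    · simp [hab]
    refine (f a - f b).roots.toFinset.finite_toSet.subset fun t ht => ?_
    simp [Polynomial.mem_roots (sub_ne_zero.2 (hf.ne hab)), ht.2]
  obtain ⟨t, ht⟩ := hS.infinite_compl.nonempty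
  refine ⟨t, fun a b hab => by_contra fun hne => ht ?_⟩
  simp only [Set.mem_iUnion]
  exact ⟨a, b, hne, hab⟩

section Orbits

variable {n k : ℕ}

theorem mem_orbit_of_injective_coord {a : Fin n} {v w : Fin k → Fin n → ℂ}
    (hv : Function.Injective fun i => v i a) (hvw : ∀ i, w i a = v i a) :
    w ∈ orbit (polyAutDetOne n) v := by
  classical
  set f : Fin n → Polynomial ℂ := fun j =>
    Lagrange.interpolate Finset.univ (fun i => v i a) (fun i => w i j - v i j)
  have hf : f a = 0 := by simp [f, hvw]
  refine ⟨⟨shear a f hf, shear_mem_polyAutDetOne a f hf⟩, funext fun i => funext fun j => ?_⟩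
  change v i j + (f j).eval (v i a) = w i j
  rw [Lagrange.eval_interpolate_at_node _ hv.injOn (Finset.mem_univ i), add_sub_cancel]

theorem exists_specialLinearGroup_injective_apply_zero [NeZero n] (p : Fin k → Fin n → ℂ)
    (hp : Function.Injective p) :
    ∃ A : Matrix.SpecialLinearGroup (Fin n) ℂ,
      Function.Injective fun i => Matrix.SpecialLinearGroup.toLin' A (p i) 0 := by
  classical
  obtain ⟨t, ht⟩ := Polynomial.exists_eval_injective (fun i => Polynomial.ofFn n (p i))
    ((Polynomial.injective_ofFn n).comp hp)
  set M := (1 : Matrix (Fin n) (Fin n) ℂ).updateRow 0 (fun j => t ^ (j : ℕ))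
  have hM : M.det = 1 := by
    have hrow : ∑ j : Fin n, t ^ (j : ℕ) • (1 : Matrix (Fin n) (Fin n) ℂ) j =
        fun j : Fin n => t ^ (j : ℕ) := by
      ext j
      simp [Matrix.one_apply]
    simpa [hrow] using Matrix.det_updateRow_sum 1 (0 : Fin n) (fun j => t ^ (j : ℕ))
  refine ⟨⟨M, hM⟩, ?_⟩
  convert ht using 2 with i
  change (M *ᵥ p i) 0 = _
  simp [M, Matrix.mulVec, dotProduct, Polynomial.ofFn_eq_sum_monomial, Polynomial.eval_finsetSum,
    mul_comm]

theorem exists_single_zero_mem_orbit [NeZero n] (p : Fin k → Fin n → ℂ)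
    (hp : Function.Injective p) :
    ∃ x : Fin k → ℂ, Function.Injective x ∧
      (fun i => Pi.single 0 (x i)) ∈ orbit (polyAutDetOne n) p := by
  obtain ⟨A, hA⟩ := exists_specialLinearGroup_injective_apply_zero p hp
  let σ : polyAutDetOne n := ⟨_, toLin'_mem_polyAutDetOne A⟩
  exact ⟨_, hA, mem_orbit_trans (mem_orbit p σ)
    (mem_orbit_of_injective_coord (v := σ • p) hA fun _ => rfl)⟩

theorem single_mem_orbit_single {a b : Fin n} (hab : a ≠ b) {x y : Fin k → ℂ}
    (hx : Function.Injective x) (hy : Function.Injective y) :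
    (fun i => (Pi.single a (y i) : Fin n → ℂ)) ∈
      orbit (polyAutDetOne n) fun i => (Pi.single a (x i) : Fin n → ℂ) := by
  let z : Fin k → ℂ := fun i => (i : ℂ)
  have hz : Function.Injective z := Nat.cast_injective.comp Fin.val_injective
  let u : Fin k → Fin n → ℂ := fun i => Pi.single a (x i) + Pi.single b (z i)
  let u' : Fin k → Fin n → ℂ := fun i => Pi.single a (y i) + Pi.single b (z i)
  have h₁ : u ∈ orbit (polyAutDetOne n) fun i => (Pi.single a (x i) : Fin n → ℂ) :=
    mem_orbit_of_injective_coord (a := a) (by simpa using hx) (by simp [u, hab.symm])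
  have h₂ : u' ∈ orbit (polyAutDetOne n) u :=
    mem_orbit_of_injective_coord (a := b) (by simpa [u, hab] using hz) (by simp [u, u', hab])
  have h₃ : (fun i => (Pi.single a (y i) : Fin n → ℂ)) ∈ orbit (polyAutDetOne n) u' :=
    mem_orbit_of_injective_coord (a := a) (by simpa [u', hab.symm] using hy)
      (by simp [u', hab.symm])
  exact mem_orbit_trans h₁ (mem_orbit_trans h₂ h₃)

theorem isMultiplyPretransitive_polyAutDetOne (hn : 2 ≤ n) (k : ℕ) :
    IsMultiplyPretransitive (polyAutDetOne n) (Fin n → ℂ) k := by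
  have : NeZero n := ⟨by omega⟩
  refine isMultiplyPretransitive_iff.mpr fun p q => ?_
  obtain ⟨x, hx, hpx⟩ := exists_single_zero_mem_orbit p p.injective
  obtain ⟨y, hy, hqy⟩ := exists_single_zero_mem_orbit q q.injective
  have hxy := single_mem_orbit_single (a := 0) (b := ⟨1, hn⟩) (by simp [Fin.ext_iff]) hx hy
  obtain ⟨σ, hσ⟩ := mem_orbit_trans hpx (mem_orbit_trans hxy (mem_orbit_symm.mp hqy))
  exact ⟨σ, Function.Embedding.ext fun i => congrFun hσ i⟩

end Orbits

/-- the group of polynomial automorphisms of `ℂⁿ` (`n ≥ 2`) with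
Jacobian determinant `1` acts `k`-transitively on `ℂⁿ` for every `k`: any
`k` pairwise distinct points can be mapped to any other `k` pairwise distinct
points by such an automorphism. -/
theorem stmt9 (n : ℕ) (hn : 2 ≤ n) (k : ℕ) (p q : Fin k → Fin n → ℂ)
    (hp : Function.Injective p) (hq : Function.Injective q) :
    ∃ φ : (Fin n → ℂ) → (Fin n → ℂ), IsPolyAutDetOne n φ ∧ ∀ i, φ (p i) = q i := by
  have := isMultiplyPretransitive_polyAutDetOne hn k
  obtain ⟨σ, hσ⟩ := exists_smul_eq (polyAutDetOne n) (⟨p, hp⟩ : Fin k ↪ _) ⟨q, hq⟩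
  exact ⟨σ, σ.2.1, fun i => DFunLike.congr_fun hσ i⟩
end
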